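/- arXiv:1611.08870 — 4 statements merged into one kernel-verified Lean document; each statement's English description precedes it below -/
import Mathlib

section
/- Suppose that for every λ in an index set Λ with 1 ≤ |Λ| ≤ ω, H(λ) is a π-tree on a topological space X_λ and cofin(ω) ≫ Rise_{H(λ)}(X_λ). Suppose also that a space Y has a π-tree. Then the product space Y × ∏_{λ∈Λ} X_λ has a π-tree. -/
open Set

universe u v

/-- A family `γ` π-refines `δ`: every nonempty member of `δ` contains a
nonempty member of `γ`. -/
def PiRefines {α : Type*} (γ δ : Set (Set α)) : Prop :=
  ∀ D ∈ δ, D.Nonempty → ∃ G ∈ γ, G.Nonempty ∧ G ⊆ D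

/-- The finite intersection property. -/
def HasFIP {α : Type*} (γ : Set (Set α)) : Prop :=
  ∀ δ : Set (Set α), δ ⊆ γ → δ.Finite → δ.Nonempty → (⋂₀ δ).Nonempty

/-- `cofin A` is the family of complements in `A` of finite subsets of `A`. -/
def cofin (A : Set ℕ) : Set (Set ℕ) :=
  {B | ∃ C : Set ℕ, C.Finite ∧ C ⊆ A ∧ B = A \ C}

/-- A foliage tree on `X`: a set-theoretic tree (strict partial order with
well-ordered sets of strict predecessors) with a leaf (a subset of `X`)
attached to each node. -/
structure FoliageTree (X : Type u) where
  Node : Type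
  lt : Node → Node → Prop
  lt_irrefl : ∀ a, ¬ lt a a
  lt_trans : ∀ {a b c}, lt a b → lt b c → lt a c
  wellOrdered : ∀ a : Node, IsWellOrder {b : Node // lt b a} fun x y => lt x.1 y.1
  leaf : Node → Set X

/-- Strict proper-extension order on finite sequences of naturals. -/
def seqLT (a b : List ℕ) : Prop := a <+: b ∧ a ≠ b

namespace FoliageTree

variable {X : Type u}

/-- The sons (immediate successors) of a node. -/
def Sons (F : FoliageTree X) (x : F.Node) : Set F.Node :=
  {s | F.lt x s ∧ ¬ ∃ t, F.lt x t ∧ F.lt t s}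

/-- A node is maximal if it has no strict successor. -/
def IsMaxNode (F : FoliageTree X) (x : F.Node) : Prop := ¬ ∃ s, F.lt x s

/-- A chain of nodes. -/
def IsChainN (F : FoliageTree X) (C : Set F.Node) : Prop :=
  ∀ x ∈ C, ∀ y ∈ C, F.lt x y ∨ x = y ∨ F.lt y x

/-- A branch is a maximal chain. -/
def IsBranch (F : FoliageTree X) (B : Set F.Node) : Prop :=
  F.IsChainN B ∧ ∀ C, F.IsChainN C → B ⊆ C → B = C

/-- The height of a node: the order type of its set of strict predecessors. -/
noncomputable def height (F : FoliageTree X) (v : F.Node) : Ordinal :=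
  @Ordinal.type {b : F.Node // F.lt b v} (fun x y => F.lt x.1 y.1) (F.wellOrdered v)

/-- `shoot F v`: unions of leaves over cofinite sets of sons of `v`. -/
def shoot (F : FoliageTree X) (v : F.Node) : Set (Set X) :=
  {S | ∃ C : Set F.Node, C ⊆ F.Sons v ∧ (F.Sons v \ C).Finite ∧ S = ⋃ s ∈ C, F.leaf s}

/-- `scope F p`: the nodes whose leaf contains `p`. -/
def scope (F : FoliageTree X) (p : X) : Set F.Node := {x | p ∈ F.leaf x}

/-- The union of all leaves. -/
def flesh (F : FoliageTree X) : Set X := ⋃ x, F.leaf x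

/-- `F` is a foliage `ω,ω`-tree: its skeleton is order-isomorphic to
`(ω^{<ω}, ⊂)`. -/
def IsOmegaOmegaTree (F : FoliageTree X) : Prop := Nonempty (F.lt ≃r seqLT)

/-- `F` is locally strict: the leaf of every non-maximal node is the disjoint
union of the leaves of its sons. -/
def LocallyStrict (F : FoliageTree X) : Prop :=
  ∀ x, ¬ F.IsMaxNode x →
    F.leaf x = (⋃ s ∈ F.Sons x, F.leaf s) ∧
      ∀ s ∈ F.Sons x, ∀ t ∈ F.Sons x, s ≠ t → Disjoint (F.leaf s) (F.leaf t)

/-- `F` has strict branches: it has nodes, and along every branch the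
intersection of the leaves is a singleton. -/
def StrictBranches (F : FoliageTree X) : Prop :=
  Nonempty F.Node ∧ ∀ B, F.IsBranch B → ∃ p, (⋂ x ∈ B, F.leaf x) = {p}

/-- `r` is the root: the least node. -/
def IsRoot (F : FoliageTree X) (r : F.Node) : Prop := ∀ x, r = x ∨ F.lt r x

/-- All leaves are open. -/
def OpenIn [TopologicalSpace X] (F : FoliageTree X) : Prop := ∀ x, IsOpen (F.leaf x)

/-- `F` is a Baire foliage tree on `X`. -/
def IsBaireFoliageTree [TopologicalSpace X] (F : FoliageTree X) : Prop :=
  F.OpenIn ∧ F.LocallyStrict ∧ F.IsOmegaOmegaTree ∧ F.StrictBranches ∧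
    ∃ r, F.IsRoot r ∧ F.leaf r = Set.univ

/-- `F` grows into `X`. -/
def GrowsInto [TopologicalSpace X] (F : FoliageTree X) : Prop :=
  ∀ p : X, ∀ U ∈ nhds p, ∃ z ∈ F.scope p, PiRefines (F.shoot z) {U}

/-- `F` is a π-tree on `X`. -/
def IsPiTree [TopologicalSpace X] (F : FoliageTree X) : Prop :=
  F.IsBaireFoliageTree ∧ F.GrowsInto

/-- `rise F p U`: the set of (finite) heights of nodes `v` whose leaf contains
`p` and whose shoot π-refines `{U}`. -/
noncomputable def rise (F : FoliageTree X) (p : X) (U : Set X) : Set ℕ :=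
  {n | ∃ v ∈ F.scope p, PiRefines (F.shoot v) {U} ∧ F.height v = (n : Ordinal)}

/-- `Rise F`: all sets `rise F p U` for `p ∈ X` and `U` a neighbourhood of `p`. -/
def Rise [TopologicalSpace X] (F : FoliageTree X) : Set (Set ℕ) :=
  {R | ∃ p U, U ∈ nhds p ∧ R = F.rise p U}

end FoliageTree


/-!
A π-tree on `X`, transported along the isomorphism of its tree with `ω^{<ω}`, becomes a
`BaireScheme`: leaves indexed by finite sequences, in which every neighbourhood of every point
contains the shoot of the point's node at some depth (`Grows`); `cofin ω ≫ Rise` says that this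
happens at all but finitely many depths (`GrowsEventually`).

The product scheme on `∏ i : Option Λ` (with `Y` at `none`) is generated by a machine running in
cycles. In cycle `c` the coordinates of code at most `c` are active, each holding a node `v` and a
lower bound `s` for the index of its next son. The first step of the cycle sorts a point by the
least relative son index `κ` over the active coordinates and the first coordinate attaining it,
sends that coordinate to its son and raises the bound of the others to about `κ`; the other steps
send the remaining active coordinates to their sons. Hence coordinate `i` sits at depth
`c - encode i` at the start of cycle `c`, and the `k`-th son of such a node keeps every active
coordinate in sons of index at least `k / width`. A cycle at which every constrained coordinate's
node shoots into its factor exists because this holds at infinitely many depths for `Y` and at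
all large depths for the others, and there the product node shoots into the basic neighbourhood.
-/

open Filter Topology

section ListPrefix

lemma List.map_range_prefix_map_range (g : ℕ → ℕ) {m n : ℕ} (h : m ≤ n) :
    (List.range m).map g <+: (List.range n).map g := by
  rw [List.prefix_iff_eq_take]
  simp [← List.map_take, h]

lemma List.map_range_getD (a : List ℕ) : (List.range a.length).map (fun n => a.getD n 0) = a :=
  List.ext_getElem (by simp) fun n _ hn => by simp [List.getElem?_eq_getElem hn]

lemma subset_of_prefix_of_append_singleton_subset {X : Type*} {L : List ℕ → Set X}
    (hL : ∀ a k, L (a ++ [k]) ⊆ L a) {a b : List ℕ} (hab : a <+: b) : L b ⊆ L a := by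
  obtain ⟨t, rfl⟩ := hab
  induction t using List.reverseRecOn with
  | nil => simp
  | append_singleton t k ih => exact (List.append_assoc a t [k] ▸ hL (a ++ t) k).trans ih

end ListPrefix

section SeqTree

lemma seqLT.length_lt {a b : List ℕ} (h : seqLT a b) : a.length < b.length :=
  lt_of_le_of_ne h.1.length_le fun hl => h.2 (h.1.eq_of_length hl)

lemma seqLT_iff_length_lt {a b : List ℕ} (h : a <+: b) : seqLT a b ↔ a.length < b.length :=
  ⟨seqLT.length_lt, fun hl => ⟨h, fun hab => by rw [hab] at hl; exact lt_irrefl _ hl⟩⟩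

lemma seqLT_sons_iff {a b : List ℕ} :
    (seqLT a b ∧ ¬∃ t, seqLT a t ∧ seqLT t b) ↔ ∃ k, b = a ++ [k] := by
  constructor
  · rintro ⟨⟨⟨t, rfl⟩, hne⟩, hmin⟩
    match t, hne with
    | [], hne => simp at hne
    | [k], _ => exact ⟨k, rfl⟩
    | k :: l :: t, _ =>
      refine absurd ⟨a ++ [k], ⟨⟨[k], rfl⟩, by simp⟩, ⟨⟨l :: t, by simp⟩, by simp⟩⟩ hmin
  · rintro ⟨k, rfl⟩
    refine ⟨⟨⟨[k], rfl⟩, by simp⟩, fun ⟨t, hat, htb⟩ => ?_⟩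
    have h₁ := hat.length_lt
    have h₂ := htb.length_lt
    simp at h₂
    omega

lemma wellOrder_seqLT (a : List ℕ) :
    IsWellOrder {b : List ℕ // seqLT b a} fun x y => seqLT x.1 y.1 where
  trichotomous x y hxy hyx := by
    rcases List.prefix_or_prefix_of_prefix x.2.1 y.2.1 with h | h
    · exact Subtype.ext (by_contra fun hne => hxy ⟨h, hne⟩)
    · exact Subtype.ext (by_contra fun hne => hyx ⟨h, Ne.symm hne⟩)
  wf := Subrelation.wf (fun h => seqLT.length_lt h)
    (InvImage.wf (fun x : {b : List ℕ // seqLT b a} => x.1.length) wellFounded_lt)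

def prefixEquivFin (a : List ℕ) : {b : List ℕ // seqLT b a} ≃ Fin a.length where
  toFun b := ⟨b.1.length, b.2.length_lt⟩
  invFun j := ⟨a.take j, (seqLT_iff_length_lt (List.take_prefix _ _)).2 (by simp)⟩
  left_inv b := Subtype.ext (List.prefix_iff_eq_take.1 b.2.1).symm
  right_inv j := Fin.ext (by simp)

lemma seqLT.trans {a b c : List ℕ} (hab : seqLT a b) (hbc : seqLT b c) : seqLT a c :=
  (seqLT_iff_length_lt (hab.1.trans hbc.1)).2 (hab.length_lt.trans hbc.length_lt)

end SeqTree

namespace FoliageTree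

variable {X : Type*} (F : FoliageTree X) (e : F.lt ≃r seqLT)

lemma lt_iff_seqLT (x y : F.Node) : F.lt x y ↔ seqLT (e x) (e y) := e.map_rel_iff.symm

lemma injective_symm_append_singleton (a : List ℕ) :
    Function.Injective fun k => e.symm (a ++ [k]) := fun j k h => by
  simpa using e.symm.injective h

lemma sons_symm_apply (a : List ℕ) :
    F.Sons (e.symm a) = Set.range fun k => e.symm (a ++ [k]) := by
  ext s
  have hmid : (∃ t, F.lt (e.symm a) t ∧ F.lt t s) ↔ ∃ t, seqLT a t ∧ seqLT t (e s) :=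
    ⟨fun ⟨t, h₁, h₂⟩ => ⟨e t, by simpa [lt_iff_seqLT F e] using h₁, (lt_iff_seqLT F e _ _).1 h₂⟩,
      fun ⟨t, h₁, h₂⟩ =>
        ⟨e.symm t, by simpa [lt_iff_seqLT F e] using h₁, by simpa [lt_iff_seqLT F e] using h₂⟩⟩
  change (F.lt (e.symm a) s ∧ _) ↔ _
  rw [lt_iff_seqLT F e, e.apply_symm_apply, hmid, seqLT_sons_iff]
  exact exists_congr fun k => by rw [eq_comm, RelIso.symm_apply_eq]

lemma height_eq_length (v : F.Node) : F.height v = (e v).length := by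
  let E : {b // F.lt b v} ≃ Fin (e v).length :=
    (e.toEquiv.subtypeEquiv fun b => lt_iff_seqLT F e b v).trans (prefixEquivFin _)
  let := Fintype.ofEquiv _ E.symm
  rw [height, Ordinal.type_fintype, Fintype.card_congr E, Fintype.card_fin]

lemma isChainN_iff (C : Set F.Node) :
    F.IsChainN C ↔ ∀ x ∈ C, ∀ y ∈ C, e x <+: e y ∨ e y <+: e x := by
  refine forall₂_congr fun x _ => forall₂_congr fun y _ => ?_
  rw [lt_iff_seqLT F e, lt_iff_seqLT F e, ← e.injective.eq_iff]
  constructor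
  · rintro (h | h | h)
    exacts [Or.inl h.1, Or.inl (h ▸ List.prefix_refl _), Or.inr h.1]
  · rintro (h | h)
    · by_cases hxy : e x = e y
      exacts [Or.inr (Or.inl hxy), Or.inl ⟨h, hxy⟩]
    · by_cases hxy : e x = e y
      exacts [Or.inr (Or.inl hxy), Or.inr (Or.inr ⟨h, Ne.symm hxy⟩)]

lemma isBranch_iff (B : Set F.Node) :
    F.IsBranch B ↔ ∃ g : ℕ → ℕ, B = Set.range fun n => e.symm ((List.range n).map g) := by
  have hchain : ∀ g : ℕ → ℕ, F.IsChainN (Set.range fun n => e.symm ((List.range n).map g)) := by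
    intro g
    rw [isChainN_iff F e]
    rintro - ⟨m, rfl⟩ - ⟨n, rfl⟩
    simp only [e.apply_symm_apply]
    rcases le_total m n with h | h
    exacts [Or.inl (List.map_range_prefix_map_range g h),
      Or.inr (List.map_range_prefix_map_range g h)]
  constructor
  · classical
    rintro ⟨hB, hmax⟩
    have hcomp := (isChainN_iff F e B).1 hB
    let g : ℕ → ℕ := fun n => if h : ∃ x ∈ B, n < (e x).length then (e h.choose).getD n 0 else 0
    refine ⟨g, hmax _ (hchain g) fun x hx => ⟨(e x).length, ?_⟩⟩
    rw [RelIso.symm_apply_eq]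
    refine List.ext_getElem (by simp) fun n hn hn' => ?_
    have h : ∃ x ∈ B, n < (e x).length := ⟨x, hx, hn'⟩
    simp only [List.getElem_map, List.getElem_range, g, dif_pos h,
      List.getD_eq_getElem _ _ h.choose_spec.2]
    rcases hcomp _ h.choose_spec.1 x hx with hp | hp
    · exact hp.getElem _
    · exact (hp.getElem _).symm
  · rintro ⟨g, rfl⟩
    refine ⟨hchain g, fun C hC hsub => subset_antisymm hsub fun x hx => ⟨(e x).length, ?_⟩⟩
    have hgx : e.symm ((List.range (e x).length).map g) ∈ C := hsub ⟨_, rfl⟩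
    rw [RelIso.symm_apply_eq]
    have hp := (isChainN_iff F e C).1 hC _ hgx x hx
    rw [e.apply_symm_apply] at hp
    rcases hp with hp | hp
    · exact hp.eq_of_length (by simp)
    · exact (hp.eq_of_length (by simp)).symm

lemma strictBranches_iff :
    F.StrictBranches ↔ ∀ g : ℕ → ℕ, ∃ p, ⋂ n, F.leaf (e.symm ((List.range n).map g)) = {p} := by
  simp only [StrictBranches, isBranch_iff F e, forall_exists_index, forall_eq_apply_imp_iff,
    Set.biInter_range]
  exact ⟨fun h => h.2, fun h => ⟨⟨e.symm []⟩, h⟩⟩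

lemma locallyStrict_iff :
    F.LocallyStrict ↔ ∀ a, F.leaf (e.symm a) = ⋃ k, F.leaf (e.symm (a ++ [k])) ∧
      ∀ j k, j ≠ k → Disjoint (F.leaf (e.symm (a ++ [j]))) (F.leaf (e.symm (a ++ [k]))) := by
  have hnotMax : ∀ x, ¬ F.IsMaxNode x := fun x hx =>
    hx ⟨e.symm (e x ++ [0]), by
      rw [lt_iff_seqLT F e, e.apply_symm_apply]
      exact ⟨⟨[0], rfl⟩, by simp⟩⟩
  refine ⟨fun h a => ?_, fun h x _ => ?_⟩
  · obtain ⟨hcover, hdisj⟩ := h _ (hnotMax (e.symm a))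
    rw [sons_symm_apply, Set.biUnion_range] at hcover
    rw [sons_symm_apply] at hdisj
    exact ⟨hcover, fun j k hjk =>
      hdisj _ ⟨j, rfl⟩ _ ⟨k, rfl⟩ ((injective_symm_append_singleton F e a).ne hjk)⟩
  · rw [← e.symm_apply_apply x, sons_symm_apply, Set.biUnion_range]
    refine ⟨(h _).1, ?_⟩
    rintro _ ⟨j, rfl⟩ _ ⟨k, rfl⟩ hjk
    exact (h _).2 j k fun h' => hjk (h' ▸ rfl)

lemma exists_root_iff :
    (∃ r, F.IsRoot r ∧ F.leaf r = univ) ↔ F.leaf (e.symm []) = univ := by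
  have hroot : ∀ r, F.IsRoot r ↔ r = e.symm [] := by
    intro r
    constructor
    · intro h
      rcases h (e.symm []) with h | h
      · exact h
      · rw [lt_iff_seqLT F e, e.apply_symm_apply] at h
        exact absurd h.length_lt (by simp)
    · rintro rfl x
      rw [lt_iff_seqLT F e, e.apply_symm_apply, RelIso.symm_apply_eq]
      by_cases hx : [] = e x
      exacts [Or.inl hx, Or.inr ⟨List.nil_prefix, hx⟩]
  simp [hroot]

lemma piRefines_shoot_iff (hne : ∀ a, (F.leaf (e.symm a)).Nonempty) (v : F.Node) {U : Set X}
    (hU : U.Nonempty) :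
    PiRefines (F.shoot v) {U} ↔ ∀ᶠ k in atTop, F.leaf (e.symm (e v ++ [k])) ⊆ U := by
  have hsons := sons_symm_apply F e (e v)
  rw [e.symm_apply_apply] at hsons
  have hinj := injective_symm_append_singleton F e (e v)
  rw [← Nat.cofinite_eq_atTop]
  constructor
  · intro h
    obtain ⟨-, ⟨C, hC, hfin, rfl⟩, -, hCU⟩ := h U rfl hU
    refine ((hfin.preimage hinj.injOn).subset fun k hk => ⟨by rw [hsons]; exact ⟨k, rfl⟩, ?_⟩)
    exact fun hkC => hk ((subset_biUnion_of_mem hkC).trans hCU)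
  · rintro h D rfl -
    obtain ⟨N, hN⟩ := eventually_atTop.1 (Nat.cofinite_eq_atTop ▸ h)
    refine ⟨_, ⟨(fun k => e.symm (e v ++ [k])) '' Ici N, ?_, ?_, rfl⟩, ?_, ?_⟩
    · rw [hsons]
      exact image_subset_range _ _
    · rw [hsons, ← image_univ, ← image_sdiff hinj, ← compl_eq_univ_sdiff, compl_Ici]
      exact (finite_Iio N).image _
    · exact ((hne _).mono (subset_biUnion_of_mem (mem_image_of_mem _ (mem_Ici.2 le_rfl))))
    · exact iUnion₂_subset fun _ ⟨k, hk, hks⟩ => hks ▸ hN k hk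

end FoliageTree

/-- A Baire foliage tree whose underlying tree is `ω^{<ω}` itself. -/
structure BaireScheme (X : Type*) [TopologicalSpace X] where
  leaf : List ℕ → Set X
  leaf_nil : leaf [] = univ
  isOpen_leaf : ∀ a, IsOpen (leaf a)
  leaf_eq_iUnion : ∀ a, leaf a = ⋃ k, leaf (a ++ [k])
  disjoint_leaf : ∀ a {j k}, j ≠ k → Disjoint (leaf (a ++ [j])) (leaf (a ++ [k]))
  iInter_eq_singleton : ∀ g : ℕ → ℕ, ∃ x, ⋂ n, leaf ((List.range n).map g) = {x}

namespace BaireScheme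

variable {X : Type*} [TopologicalSpace X] (S : BaireScheme X)

lemma leaf_append_singleton_subset (a : List ℕ) (k : ℕ) : S.leaf (a ++ [k]) ⊆ S.leaf a :=
  (S.leaf_eq_iUnion a).symm ▸ subset_iUnion (fun k => S.leaf (a ++ [k])) k

lemma leaf_subset_of_prefix {a b : List ℕ} (h : a <+: b) : S.leaf b ⊆ S.leaf a :=
  subset_of_prefix_of_append_singleton_subset S.leaf_append_singleton_subset h

lemma leaf_nonempty (a : List ℕ) : (S.leaf a).Nonempty := by
  obtain ⟨x, hx⟩ := S.iInter_eq_singleton fun n => a.getD n 0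
  have hmem : x ∈ ⋂ n, S.leaf ((List.range n).map fun n => a.getD n 0) := hx ▸ rfl
  have hx := mem_iInter.1 hmem a.length
  rw [List.map_range_getD] at hx
  exact ⟨x, hx⟩

/-- The index of the son of `v` whose leaf contains `x` (meaningful when `x ∈ S.leaf v`). -/
noncomputable def childIdx (v : List ℕ) (x : X) : ℕ := sInf {k | x ∈ S.leaf (v ++ [k])}

lemma mem_leaf_append_singleton {v : List ℕ} {k : ℕ} {x : X} :
    x ∈ S.leaf (v ++ [k]) ↔ x ∈ S.leaf v ∧ S.childIdx v x = k := by
  constructor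
  · intro hx
    refine ⟨S.leaf_append_singleton_subset v k hx, ?_⟩
    by_contra hne
    have hmin : x ∈ S.leaf (v ++ [S.childIdx v x]) :=
      Nat.sInf_mem (s := {k | x ∈ S.leaf (v ++ [k])}) ⟨k, hx⟩
    exact Set.disjoint_left.1 (S.disjoint_leaf v hne) hmin hx
  · rintro ⟨hv, rfl⟩
    rw [S.leaf_eq_iUnion, mem_iUnion] at hv
    exact Nat.sInf_mem hv

noncomputable def node (x : X) : ℕ → List ℕ
  | 0 => []
  | n + 1 => node x n ++ [S.childIdx (node x n) x]

@[simp]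
lemma length_node (x : X) (n : ℕ) : (S.node x n).length = n := by
  induction n with
  | zero => rfl
  | succ n ih => simp [node, ih]

lemma mem_leaf_iff {a : List ℕ} {x : X} : x ∈ S.leaf a ↔ S.node x a.length = a := by
  induction a using List.reverseRecOn with
  | nil => simp [S.leaf_nil, node, mem_univ]
  | append_singleton a k ih =>
    rw [mem_leaf_append_singleton, ih, List.length_append, List.length_singleton, node]
    constructor
    · rintro ⟨ha, rfl⟩
      rw [ha]
    · intro h
      obtain ⟨ha, hk⟩ := List.append_inj' h rfl
      exact ⟨ha, by simpa [ha] using hk⟩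

lemma mem_leaf_node (x : X) (n : ℕ) : x ∈ S.leaf (S.node x n) := by
  rw [mem_leaf_iff, length_node]

lemma node_prefix (x : X) {m n : ℕ} (h : m ≤ n) : S.node x m <+: S.node x n := by
  induction n, h using Nat.le_induction with
  | base => exact List.prefix_refl _
  | succ n _ ih => exact ih.trans (List.prefix_append _ _)

/-- `S.tail (v, s)`: the points of `S.leaf v` lying in a son `v ++ [j]` with `s ≤ j`. -/
def tail (p : List ℕ × ℕ) : Set X := ⋃ k, S.leaf (p.1 ++ [p.2 + k])

lemma mem_tail {p : List ℕ × ℕ} {x : X} :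
    x ∈ S.tail p ↔ x ∈ S.leaf p.1 ∧ p.2 ≤ S.childIdx p.1 x := by
  simp only [tail, mem_iUnion, S.mem_leaf_append_singleton]
  constructor
  · rintro ⟨k, hx, hk⟩
    exact ⟨hx, by omega⟩
  · rintro ⟨hx, hk⟩
    exact ⟨_, hx, (Nat.add_sub_cancel' hk).symm⟩

lemma tail_zero (v : List ℕ) : S.tail (v, 0) = S.leaf v := by
  ext x
  simp [mem_tail]

lemma isOpen_tail (p : List ℕ × ℕ) : IsOpen (S.tail p) :=
  isOpen_iUnion fun _ => S.isOpen_leaf _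

lemma tail_subset_tail {v : List ℕ} {s s' : ℕ} (h : s ≤ s') : S.tail (v, s') ⊆ S.tail (v, s) :=
  fun _ hx => S.mem_tail.2 ⟨(S.mem_tail.1 hx).1, h.trans (S.mem_tail.1 hx).2⟩

lemma tail_append_subset_tail {v : List ℕ} {s j : ℕ} (h : s ≤ j) :
    S.tail (v ++ [j], 0) ⊆ S.tail (v, s) := by
  intro x hx
  rw [tail_zero, mem_leaf_append_singleton] at hx
  exact S.mem_tail.2 ⟨hx.1, hx.2 ▸ h⟩

lemma mem_tail_add_iff {v : List ℕ} {s n : ℕ} {x : X} (hx : x ∈ S.tail (v, s)) :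
    x ∈ S.tail (v, s + n) ↔ n ≤ S.childIdx v x - s := by
  have := S.mem_tail.1 hx
  rw [mem_tail]
  dsimp only at this ⊢
  exact ⟨fun h => by omega, fun h => ⟨this.1, by omega⟩⟩

lemma mem_tail_append_iff {v : List ℕ} {s n : ℕ} {x : X} (hx : x ∈ S.tail (v, s)) :
    x ∈ S.tail (v ++ [s + n], 0) ↔ S.childIdx v x - s = n := by
  have := S.mem_tail.1 hx
  rw [tail_zero, mem_leaf_append_singleton]
  dsimp only at this
  exact ⟨fun h => by omega, fun h => ⟨this.1, by omega⟩⟩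

/-- Cofinitely many sons of `a` have their leaf inside `U`: the shoot of `a` π-refines `{U}`. -/
def ShootsInto (a : List ℕ) (U : Set X) : Prop := ∀ᶠ k in atTop, S.leaf (a ++ [k]) ⊆ U

lemma ShootsInto.mono {S : BaireScheme X} {a : List ℕ} {U V : Set X} (h : S.ShootsInto a U)
    (hUV : U ⊆ V) : S.ShootsInto a V :=
  Eventually.mono h fun _ hk => hk.trans hUV

lemma ShootsInto.eventually_tail_subset {S : BaireScheme X} {v : List ℕ} {U : Set X}
    (h : S.ShootsInto v U) : ∀ᶠ s in atTop, S.tail (v, s) ⊆ U := by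
  obtain ⟨N, hN⟩ := eventually_atTop.1 h
  filter_upwards [eventually_ge_atTop N] with s hs
  exact iUnion_subset fun k => hN _ (by omega)

lemma length_le_of_shootsInto_leaf {a b : List ℕ} (h : S.ShootsInto b (S.leaf a)) :
    a.length ≤ b.length := by
  by_contra! hlt
  obtain ⟨N, hN⟩ := eventually_atTop.1 h
  have hson : ∀ k, N ≤ k → ∃ x, S.node x a.length = a ∧ S.node x (b.length + 1) = b ++ [k] := by
    intro k hk
    obtain ⟨x, hx⟩ := S.leaf_nonempty (b ++ [k])
    exact ⟨x, S.mem_leaf_iff.1 (hN k hk hx), by simpa using S.mem_leaf_iff.1 hx⟩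
  obtain ⟨x, hxa, hxb⟩ := hson N le_rfl
  obtain ⟨y, hya, hyb⟩ := hson (N + 1) (by omega)
  have hpx : b ++ [N] <+: a := hxb ▸ hxa ▸ S.node_prefix x hlt
  have hpy : b ++ [N + 1] <+: a := hyb ▸ hya ▸ S.node_prefix y hlt
  have := (List.prefix_of_prefix_length_le hpx hpy (by simp)).eq_of_length (by simp)
  simp at this

/-- The scheme version of "grows into `X`". -/
def Grows : Prop := ∀ x, ∀ U ∈ 𝓝 x, ∃ n, S.ShootsInto (S.node x n) U

/-- Every neighbourhood of every point is shot into from all but finitely many depths: the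
scheme version of `cofin ω ≫ Rise`. -/
def GrowsEventually : Prop := ∀ x, ∀ U ∈ 𝓝 x, ∀ᶠ n in atTop, S.ShootsInto (S.node x n) U

/-- Shrinking `U` to a deep leaf around `x` forces the node shooting into it to be deep. -/
lemma Grows.frequently {S : BaireScheme X} (h : S.Grows) {x : X} {U : Set X} (hU : U ∈ 𝓝 x) :
    ∃ᶠ n in atTop, S.ShootsInto (S.node x n) U := by
  rw [frequently_atTop]
  intro N
  have hV : U ∩ S.leaf (S.node x N) ∈ 𝓝 x :=
    inter_mem hU ((S.isOpen_leaf _).mem_nhds (S.mem_leaf_node x N))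
  obtain ⟨n, hn⟩ := h x _ hV
  refine ⟨n, ?_, hn.mono inter_subset_left⟩
  simpa using S.length_le_of_shootsInto_leaf (hn.mono inter_subset_right)

lemma exists_iInter_eq_singleton {v : ℕ → List ℕ} (hv : ∀ c, v c <+: v (c + 1))
    (hlen : ∀ n, ∃ c, n ≤ (v c).length) : ∃ x, ⋂ c, S.leaf (v c) = {x} := by
  have hmono : ∀ c c', c ≤ c' → v c <+: v c' := fun c c' h => by
    induction c', h using Nat.le_induction with
    | base => exact List.prefix_refl _
    | succ c' _ ih => exact ih.trans (hv c')
  choose N hN using fun j => hlen (j + 1)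
  set g : ℕ → ℕ := fun j => (v (N j)).getD j 0
  have hg : ∀ c, (List.range (v c).length).map g = v c := by
    intro c
    refine List.ext_getElem (by simp) fun j _ hj => ?_
    have hjN : j < (v (N j)).length := by have := hN j; omega
    simp only [List.getElem_map, List.getElem_range, g, List.getD_eq_getElem _ _ hjN]
    rcases le_total c (N j) with h | h
    · exact ((hmono _ _ h).getElem hj).symm
    · exact (hmono _ _ h).getElem hjN
  obtain ⟨x, hx⟩ := S.iInter_eq_singleton g
  refine ⟨x, hx ▸ subset_antisymm ?_ ?_⟩
  · refine subset_iInter fun n => ?_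
    obtain ⟨c, hc⟩ := hlen n
    refine (iInter_subset _ c).trans (S.leaf_subset_of_prefix ?_)
    exact hg c ▸ List.map_range_prefix_map_range g hc
  · exact subset_iInter fun c => hg c ▸ iInter_subset _ _

variable {Y : Type*} [TopologicalSpace Y]

/-- Read through the chosen isomorphism of the tree with `ω^{<ω}`. -/
noncomputable def ofBaireFoliageTree (F : FoliageTree X) (hF : F.IsBaireFoliageTree) :
    BaireScheme X where
  leaf a := F.leaf (hF.2.2.1.some.symm a)
  leaf_nil := (F.exists_root_iff _).1 hF.2.2.2.2
  isOpen_leaf _ := hF.1 _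
  leaf_eq_iUnion a := ((F.locallyStrict_iff _).1 hF.2.1 a).1
  disjoint_leaf a j k h := ((F.locallyStrict_iff _).1 hF.2.1 a).2 j k h
  iInter_eq_singleton := (F.strictBranches_iff _).1 hF.2.2.2.1

def toFoliageTree (S : BaireScheme X) : FoliageTree X where
  Node := List ℕ
  lt := seqLT
  lt_irrefl _ h := h.2 rfl
  lt_trans := seqLT.trans
  wellOrdered := wellOrder_seqLT
  leaf := S.leaf

lemma isPiTree_toFoliageTree {S : BaireScheme X} (h : S.Grows) : S.toFoliageTree.IsPiTree := by
  let e : S.toFoliageTree.lt ≃r seqLT := RelIso.refl _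
  refine ⟨⟨S.isOpen_leaf, (FoliageTree.locallyStrict_iff _ e).2 fun a =>
    ⟨S.leaf_eq_iUnion a, fun _ _ => S.disjoint_leaf a⟩, ⟨e⟩,
    (FoliageTree.strictBranches_iff _ e).2 S.iInter_eq_singleton,
    (FoliageTree.exists_root_iff _ e).2 S.leaf_nil⟩, fun p U hU => ?_⟩
  obtain ⟨n, hn⟩ := h p U hU
  exact ⟨S.node p n, S.mem_leaf_node p n,
    (FoliageTree.piRefines_shoot_iff _ e S.leaf_nonempty _ ⟨p, mem_of_mem_nhds hU⟩).2 hn⟩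

lemma shootsInto_ofBaireFoliageTree {F : FoliageTree X} (hF : F.IsBaireFoliageTree) {p : X}
    {U : Set X} (hU : U ∈ 𝓝 p) {v : F.Node} (hv : v ∈ F.scope p)
    (href : PiRefines (F.shoot v) {U}) {n : ℕ} (hn : F.height v = n) :
    (ofBaireFoliageTree F hF).ShootsInto ((ofBaireFoliageTree F hF).node p n) U := by
  set S := ofBaireFoliageTree F hF
  have hpv : p ∈ S.leaf (hF.2.2.1.some v) := by
    change p ∈ F.leaf (hF.2.2.1.some.symm (hF.2.2.1.some v))
    rwa [RelIso.symm_apply_apply]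
  rw [F.height_eq_length hF.2.2.1.some, Nat.cast_inj] at hn
  rw [← hn, S.mem_leaf_iff.1 hpv]
  exact (F.piRefines_shoot_iff _ S.leaf_nonempty v ⟨p, mem_of_mem_nhds hU⟩).1 href

lemma grows_ofBaireFoliageTree {F : FoliageTree X} (hF : F.IsPiTree) :
    (ofBaireFoliageTree F hF.1).Grows := fun p U hU => by
  obtain ⟨v, hv, href⟩ := hF.2 p U hU
  exact ⟨_, shootsInto_ofBaireFoliageTree hF.1 hU hv href (F.height_eq_length hF.1.2.2.1.some v)⟩

lemma growsEventually_ofBaireFoliageTree {F : FoliageTree X} (hF : F.IsPiTree)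
    (hcof : PiRefines (cofin univ) F.Rise) : (ofBaireFoliageTree F hF.1).GrowsEventually := by
  intro p U hU
  have hrise : ∀ n ∈ F.rise p U,
      (ofBaireFoliageTree F hF.1).ShootsInto ((ofBaireFoliageTree F hF.1).node p n) U := by
    rintro n ⟨v, hv, href, hn⟩
    exact shootsInto_ofBaireFoliageTree hF.1 hU hv href hn
  have hne : (F.rise p U).Nonempty := by
    obtain ⟨v, hv, href⟩ := hF.2 p U hU
    exact ⟨_, v, hv, href, F.height_eq_length hF.1.2.2.1.some v⟩
  obtain ⟨-, ⟨C, hC, -, rfl⟩, -, hsub⟩ := hcof _ ⟨p, U, hU, rfl⟩ hne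
  rw [← Nat.cofinite_eq_atTop]
  exact eventually_cofinite.2 (hC.subset fun n hn =>
    by_contra fun hnC => hn (hrise n (hsub ⟨mem_univ n, hnC⟩)))

def comap (S : BaireScheme Y) (h : X ≃ₜ Y) : BaireScheme X where
  leaf a := h ⁻¹' S.leaf a
  leaf_nil := by rw [S.leaf_nil, preimage_univ]
  isOpen_leaf a := (S.isOpen_leaf a).preimage h.continuous
  leaf_eq_iUnion a := by rw [S.leaf_eq_iUnion a, preimage_iUnion]
  disjoint_leaf a _ _ hjk := (S.disjoint_leaf a hjk).preimage h
  iInter_eq_singleton g := by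
    obtain ⟨y, hy⟩ := S.iInter_eq_singleton g
    refine ⟨h.symm y, ?_⟩
    rw [← preimage_iInter, hy]
    ext x
    simp [eq_comm, Homeomorph.eq_symm_apply]

lemma Grows.comap {S : BaireScheme Y} (hS : S.Grows) (h : X ≃ₜ Y) : (S.comap h).Grows := by
  intro x U hU
  rw [h.nhds_eq_comap, mem_comap] at hU
  obtain ⟨V, hV, hVU⟩ := hU
  obtain ⟨n, hn⟩ := hS (h x) V hV
  have hnode : ∀ n, (S.comap h).node x n = S.node (h x) n := by
    intro n
    induction n with
    | zero => rfl
    | succ n ih => rw [node, node, ih]; rfl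
  exact ⟨n, (hnode n).symm ▸ Eventually.mono hn fun _ hk => (preimage_mono hk).trans hVU⟩

end BaireScheme

namespace ProductScheme

open Encodable

noncomputable section

open scoped Classical

section Machine

variable (ι : Type*) [Encodable ι]

/-- The coordinates taken into account during the `c`-th cycle; `none` is always one of them. -/
def active (c : ℕ) : Finset (Option ι) :=
  (Finset.range (c + 1)).preimage encode encode_injective.injOn

def width (c : ℕ) : ℕ := (active ι c).card

def cycleStart : ℕ → ℕ
  | 0 => 0
  | c + 1 => cycleStart c + width ι c

/-- Advances the clock `(cycle, phase)` by one step; the `c`-th cycle has `width ι c` phases. -/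
def tick (cq : ℕ × ℕ) : ℕ × ℕ :=
  if cq.2 + 1 < width ι cq.1 then (cq.1, cq.2 + 1) else (cq.1 + 1, 0)

/-- The order in which the coordinates are sent to a son during a cycle whose first step
singled out the `m`-th active coordinate. -/
def order (c m : ℕ) : List (Option ι) := (active ι c).toList.rotate m

def target (c m q : ℕ) : Option ι := (order ι c m).getD q none

variable {ι}

lemma mem_active {c : ℕ} {i : Option ι} : i ∈ active ι c ↔ encode i ≤ c := by
  simp [active]

lemma width_pos (c : ℕ) : 0 < width ι c :=
  Finset.card_pos.2 ⟨none, mem_active.2 (by simp)⟩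

lemma le_fst_tick (cq : ℕ × ℕ) : cq.1 ≤ (tick ι cq).1 := by
  unfold tick
  split_ifs <;> simp

lemma iterate_tick_cycleStart_add {c q : ℕ} (hq : q < width ι c) :
    (tick ι)^[cycleStart ι c + q] (0, 0) = (c, q) := by
  have hphase : ∀ c, (tick ι)^[cycleStart ι c] (0, 0) = (c, 0) → ∀ q < width ι c,
      (tick ι)^[cycleStart ι c + q] (0, 0) = (c, q) := by
    intro c h q hq
    induction q with
    | zero => exact h
    | succ q ih =>
      rw [← add_assoc, Function.iterate_succ_apply', ih (by omega), tick, if_pos hq]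
  have hstart : ∀ c, (tick ι)^[cycleStart ι c] (0, 0) = (c, 0) := by
    intro c
    induction c with
    | zero => rfl
    | succ c ih =>
      have hw := width_pos (ι := ι) c
      rw [cycleStart, show width ι c = width ι c - 1 + 1 by omega, ← add_assoc,
        Function.iterate_succ_apply', hphase c ih _ (by omega), tick, if_neg (by dsimp only; omega)]
  exact hphase c (hstart c) q hq

lemma nodup_order (c m : ℕ) : (order ι c m).Nodup :=
  List.nodup_rotate.2 (Finset.nodup_toList _)

lemma mem_order {c m : ℕ} {i : Option ι} : i ∈ order ι c m ↔ encode i ≤ c := by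
  simp [order, mem_active]

lemma length_order (c m : ℕ) : (order ι c m).length = width ι c := by
  simp [order, width]

lemma target_eq_getElem {c m q : ℕ} (hq : q < width ι c) :
    target ι c m q = (order ι c m)[q]'(by rwa [length_order]) :=
  List.getD_eq_getElem _ _ _

lemma encode_target_le (c m q : ℕ) : encode (target ι c m q) ≤ c := by
  by_cases hq : q < width ι c
  · rw [target_eq_getElem hq, ← mem_order]
    exact List.getElem_mem _
  · rw [target, List.getD_eq_default _ _ (by rw [length_order]; omega)]
    simp

lemma target_zero {c m : ℕ} (hm : m < width ι c) :
    target ι c m 0 = (active ι c).toList[m]'(by simpa [width] using hm) := by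
  rw [target_eq_getElem (width_pos c)]
  have hm' : m % (active ι c).card = m := Nat.mod_eq_of_lt hm
  simp [order, List.getElem_rotate, hm']

lemma exists_target_zero_eq {c : ℕ} {i : Option ι} (hi : encode i ≤ c) :
    ∃ m < width ι c, target ι c m 0 = i := by
  obtain ⟨m, hm, rfl⟩ := List.getElem_of_mem (Finset.mem_toList.2 (mem_active.2 hi))
  have hm' : m < width ι c := by simpa [width] using hm
  exact ⟨m, hm', target_zero hm'⟩

lemma target_zero_injOn {c m m' : ℕ} (hm : m < width ι c) (hm' : m' < width ι c)
    (h : target ι c m 0 = target ι c m' 0) : m = m' := by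
  rw [target_zero hm, target_zero hm'] at h
  exact (Finset.nodup_toList _).getElem_inj_iff.1 h

/-- A state of the machine: the clock `(cycle, phase)`, the index `star` fixed by the first
step of the current cycle, and for every coordinate `i` a pair `pos i = (v, s)` standing for the
tail of sons of `v` of index at least `s`. -/
structure Config (ι : Type*) where
  clock : ℕ × ℕ
  star : ℕ
  pos : Option ι → List ℕ × ℕ

def descend (i : Option ι) (k : ℕ) (pos : Option ι → List ℕ × ℕ) : Option ι → List ℕ × ℕ :=
  Function.update pos i ((pos i).1 ++ [(pos i).2 + k], 0)

/-- The piece of the product of the active tails in which coordinate `i₀` lies in the son of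
relative index `κ` and `(κ, encode i₀)` is the lexicographically least value of
(relative son index, code) over the active coordinates. -/
def minSplit (c : ℕ) (i₀ : Option ι) (κ : ℕ) (pos : Option ι → List ℕ × ℕ) :
    Option ι → List ℕ × ℕ := fun i =>
  if encode i ≤ c then
    if i = i₀ then ((pos i).1 ++ [(pos i).2 + κ], 0)
    else ((pos i).1, (pos i).2 + κ + if encode i < encode i₀ then 1 else 0)
  else pos i

def IsLexMin (c : ℕ) (d : Option ι → ℕ) (i : Option ι) : Prop :=
  encode i ≤ c ∧ ∀ j, encode j ≤ c → toLex (d i, encode i) ≤ toLex (d j, encode j)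

lemma exists_isLexMin (c : ℕ) (d : Option ι → ℕ) : ∃ i, IsLexMin c d i := by
  obtain ⟨i, hi, hmin⟩ := (active ι c).exists_min_image (fun i => toLex (d i, encode i))
    ⟨none, mem_active.2 (by simp)⟩
  exact ⟨i, mem_active.1 hi, fun j hj => hmin j (mem_active.2 hj)⟩

lemma IsLexMin.unique {c : ℕ} {d : Option ι → ℕ} {i i' : Option ι} (h : IsLexMin c d i)
    (h' : IsLexMin c d i') : i = i' :=
  encode_injective (congrArg (fun p => (ofLex p).2) (le_antisymm (h.2 i' h'.1) (h'.2 i h.1)))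

/-- Phase `0` of a cycle splits the active coordinates along `minSplit` (the son index `k`
encodes the pair `(k % width, k / width)`); phase `q > 0` sends coordinate
`target c star q` to a son. -/
def step (σ : Config ι) (k : ℕ) : Config ι :=
  if σ.clock.2 = 0 then
    { clock := tick ι σ.clock
      star := k % width ι σ.clock.1
      pos := minSplit σ.clock.1 (target ι σ.clock.1 (k % width ι σ.clock.1) 0)
        (k / width ι σ.clock.1) σ.pos }
  else
    { clock := tick ι σ.clock
      star := σ.star
      pos := descend (target ι σ.clock.1 σ.star σ.clock.2) k σ.pos }

def config (ι : Type*) [Encodable ι] (a : List ℕ) : Config ι :=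
  a.foldl step ⟨(0, 0), 0, fun _ => ([], 0)⟩

lemma config_append_singleton (a : List ℕ) (k : ℕ) :
    config ι (a ++ [k]) = step (config ι a) k :=
  List.foldl_concat ..

lemma clock_config (a : List ℕ) : (config ι a).clock = (tick ι)^[a.length] (0, 0) := by
  induction a using List.reverseRecOn with
  | nil => rfl
  | append_singleton a k ih =>
    rw [config_append_singleton, List.length_append, List.length_singleton,
      Function.iterate_succ_apply', ← ih, step]
    split_ifs <;> rfl

lemma clock_config_eq {a : List ℕ} {c q : ℕ} (ha : a.length = cycleStart ι c + q)
    (hq : q < width ι c) : (config ι a).clock = (c, q) := by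
  rw [clock_config, ha, iterate_tick_cycleStart_add hq]

lemma step_of_phase_eq_zero {σ : Config ι} {c : ℕ} (h : σ.clock = (c, 0)) (k : ℕ) :
    (step σ k).star = k % width ι c ∧
      (step σ k).pos = minSplit c (target ι c (k % width ι c) 0) (k / width ι c) σ.pos := by
  simp [step, h]

lemma step_of_phase_ne_zero {σ : Config ι} {c q : ℕ} (h : σ.clock = (c, q)) (hq : q ≠ 0)
    (k : ℕ) : (step σ k).star = σ.star ∧
      (step σ k).pos = descend (target ι c σ.star q) k σ.pos := by
  simp [step, h, hq]

lemma pos_config_of_lt {a : List ℕ} {i : Option ι} (h : (config ι a).clock.1 < encode i) :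
    (config ι a).pos i = ([], 0) := by
  induction a using List.reverseRecOn with
  | nil => rfl
  | append_singleton a k ih =>
    rw [config_append_singleton] at h ⊢
    have hc : (config ι a).clock.1 < encode i := by
      refine lt_of_le_of_lt (le_fst_tick (ι := ι) _) ?_
      simp only [step] at h
      split_ifs at h <;> exact h
    rcases hclk : (config ι a).clock with ⟨c, q⟩
    rw [hclk] at hc
    rcases Nat.eq_zero_or_pos q with rfl | hq
    · rw [(step_of_phase_eq_zero hclk k).2, minSplit, if_neg (by dsimp only at hc ⊢; omega)]
      exact ih (by rw [hclk]; exact hc)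
    · have hne : i ≠ target ι c (config ι a).star q := by
        rintro rfl
        have := encode_target_le (ι := ι) c (config ι a).star q
        dsimp only at hc
        omega
      rw [(step_of_phase_ne_zero hclk hq.ne' k).2, descend, Function.update_of_ne hne]
      exact ih (by rw [hclk]; exact hc)

lemma mem_take_succ_order {c m q : ℕ} (hq : q < width ι c) {i : Option ι} :
    i ∈ (order ι c m).take (q + 1) ↔ i ∈ (order ι c m).take q ∨ i = target ι c m q := by
  rw [List.take_add_one, List.mem_append, List.getElem?_eq_getElem (by rwa [length_order]),
    target_eq_getElem hq]
  simp

lemma target_not_mem_take {c m q : ℕ} (hq : q < width ι c) :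
    target ι c m q ∉ (order ι c m).take q := by
  intro h
  obtain ⟨j, hj, hjq⟩ := List.mem_iff_getElem.1 h
  rw [List.getElem_take, target_eq_getElem hq, (nodup_order c m).getElem_inj_iff] at hjq
  simp at hj
  omega

/-- During the `c`-th cycle, the coordinates listed in `order ι c star` are sent to a son one
after the other, the others are left alone. -/
lemma config_within_cycle {c : ℕ} {a t : List ℕ} (ha : a.length = cycleStart ι c) (ht₀ : t ≠ [])
    (ht : t.length ≤ width ι c) (i : Option ι) :
    (i ∈ (order ι c (config ι (a ++ t)).star).take t.length →
      ∃ x, (config ι (a ++ t)).pos i = (((config ι a).pos i).1 ++ [x], 0)) ∧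
    (i ∉ (order ι c (config ι (a ++ t)).star).take t.length →
      ((config ι (a ++ t)).pos i).1 = ((config ι a).pos i).1) ∧
    (c < encode i → (config ι (a ++ t)).pos i = (config ι a).pos i) := by
  induction t using List.reverseRecOn with
  | nil => exact absurd rfl ht₀
  | append_singleton t k ih =>
    rw [← List.append_assoc, config_append_singleton]
    rcases eq_or_ne t [] with rfl | ht'
    · obtain ⟨hstar, hpos⟩ := step_of_phase_eq_zero (clock_config_eq (q := 0) ha (width_pos c)) k
      have hR : ∀ m, i ∈ (order ι c m).take 1 ↔ i = target ι c m 0 := fun m => by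
        simpa using mem_take_succ_order (m := m) (q := 0) (width_pos c)
      simp only [List.append_nil, List.nil_append, hstar, hpos, List.length_singleton, hR,
        minSplit]
      refine ⟨fun h => ?_, fun h => ?_, fun h => ?_⟩
      · rw [if_pos (h ▸ encode_target_le c _ 0), if_pos h]
        exact ⟨_, rfl⟩
      · split_ifs <;> rfl
      · rw [if_neg (by omega)]
    · simp only [List.length_append, List.length_singleton] at ht ⊢
      obtain ⟨ih₁, ih₂, ih₃⟩ := ih ht' (by omega)
      have hq : t.length ≠ 0 := by simpa using ht'
      obtain ⟨hstar, hpos⟩ :=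
        step_of_phase_ne_zero (clock_config_eq (a := a ++ t) (by simp [ha])
          (show t.length < width ι c by omega)) hq k
      rw [hstar, hpos, mem_take_succ_order (by omega), descend]
      by_cases hi : i = target ι c (config ι (a ++ t)).star t.length
      · subst hi
        have hnot := target_not_mem_take (m := (config ι (a ++ t)).star)
          (show t.length < width ι c by omega)
        rw [Function.update_self, ih₂ hnot]
        exact ⟨fun _ => ⟨_, rfl⟩, fun h => absurd (Or.inr rfl) h,
          fun h => absurd (encode_target_le (ι := ι) c (config ι (a ++ t)).star t.length)
            (by omega)⟩
      · rw [Function.update_of_ne hi, or_iff_left hi]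
        exact ⟨ih₁, ih₂, ih₃⟩

lemma config_cycle {c : ℕ} {a t : List ℕ} (ha : a.length = cycleStart ι c)
    (ht : t.length = width ι c) (i : Option ι) :
    (encode i ≤ c → ∃ x, (config ι (a ++ t)).pos i = (((config ι a).pos i).1 ++ [x], 0)) ∧
    (c < encode i → (config ι (a ++ t)).pos i = (config ι a).pos i) := by
  have ht₀ : t ≠ [] := by
    rintro rfl
    exact (width_pos (ι := ι) c).ne (by simpa using ht)
  obtain ⟨h₁, -, h₃⟩ := config_within_cycle ha ht₀ ht.le i
  rw [ht, ← length_order c (config ι (a ++ t)).star, List.take_length, mem_order] at h₁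
  exact ⟨h₁, h₃⟩

lemma pos_config_prefix_of_cycle {c : ℕ} {a t : List ℕ} (ha : a.length = cycleStart ι c)
    (ht : t.length = width ι c) (i : Option ι) :
    ((config ι a).pos i).1 <+: ((config ι (a ++ t)).pos i).1 := by
  obtain ⟨h₁, h₂⟩ := config_cycle ha ht i
  by_cases hi : encode i ≤ c
  · obtain ⟨x, hx⟩ := h₁ hi
    rw [hx]
    exact List.prefix_append _ _
  · rw [h₂ (by omega)]

lemma config_cycleStart {c : ℕ} {a : List ℕ} (ha : a.length = cycleStart ι c) (i : Option ι) :
    ((config ι a).pos i).2 = 0 ∧ ((config ι a).pos i).1.length = c - encode i := by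
  induction c generalizing a with
  | zero =>
    rw [cycleStart, List.length_eq_zero_iff] at ha
    subst ha
    simp [config]
  | succ c ih =>
    rw [← List.take_append_drop (cycleStart ι c) a]
    have hlen : (a.take (cycleStart ι c)).length = cycleStart ι c := by
      simp [ha, cycleStart]
    obtain ⟨h₁, h₂⟩ := config_cycle hlen (t := a.drop (cycleStart ι c)) (by simp [ha, cycleStart]) i
    obtain ⟨ih₁, ih₂⟩ := ih hlen
    by_cases hi : encode i ≤ c
    · obtain ⟨x, hx⟩ := h₁ hi
      rw [hx]
      simp only [List.length_append, ih₂, List.length_singleton, true_and]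
      omega
    · rw [h₂ (by omega)]
      exact ⟨ih₁, by omega⟩

end Machine

section Boxes

variable {ι : Type*} {Z : Option ι → Type*} [∀ i, TopologicalSpace (Z i)]
  (S : ∀ i, BaireScheme (Z i))

def box (pos : Option ι → List ℕ × ℕ) : Set (∀ i, Z i) := {z | ∀ i, z i ∈ (S i).tail (pos i)}

def gap (pos : Option ι → List ℕ × ℕ) (z : ∀ i, Z i) (i : Option ι) : ℕ :=
  (S i).childIdx (pos i).1 (z i) - (pos i).2

variable {S}

lemma box_mono {pos pos' : Option ι → List ℕ × ℕ}
    (h : ∀ i, (S i).tail (pos' i) ⊆ (S i).tail (pos i)) : box S pos' ⊆ box S pos :=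
  fun _ hz i => h i (hz i)

lemma mem_box_descend {pos : Option ι → List ℕ × ℕ} {z : ∀ i, Z i} (hz : z ∈ box S pos)
    (i : Option ι) (k : ℕ) : z ∈ box S (descend i k pos) ↔ gap S pos z i = k := by
  refine ⟨fun h => ?_, fun h j => ?_⟩
  · have := h i
    rwa [descend, Function.update_self, (S i).mem_tail_append_iff (hz i)] at this
  · by_cases hj : j = i
    · subst hj
      rw [descend, Function.update_self, (S j).mem_tail_append_iff (hz j)]
      exact h
    · rw [descend, Function.update_of_ne hj]
      exact hz j

end Boxes

variable {ι : Type*} [Encodable ι] {Z : Option ι → Type*} [∀ i, TopologicalSpace (Z i)]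

section Leaves

variable {S : ∀ i, BaireScheme (Z i)}

lemma mem_box_minSplit {pos : Option ι → List ℕ × ℕ} {z : ∀ i, Z i} (hz : z ∈ box S pos)
    {c : ℕ} {i₀ : Option ι} (hi₀ : encode i₀ ≤ c) (κ : ℕ) :
    z ∈ box S (minSplit c i₀ κ pos) ↔ gap S pos z i₀ = κ ∧ IsLexMin c (gap S pos z) i₀ := by
  have hlex : ∀ j, j ≠ i₀ → (toLex (κ, encode i₀) ≤ toLex (gap S pos z j, encode j) ↔
      κ + (if encode j < encode i₀ then 1 else 0) ≤ gap S pos z j) := by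
    intro j hj
    have hne : encode j ≠ encode i₀ := encode_injective.ne hj
    rw [Prod.Lex.toLex_le_toLex]
    split_ifs <;> omega
  have hcoord : ∀ j, z j ∈ (S j).tail (minSplit c i₀ κ pos j) ↔ (encode j ≤ c →
      (j = i₀ → gap S pos z j = κ) ∧
        (j ≠ i₀ → toLex (κ, encode i₀) ≤ toLex (gap S pos z j, encode j))) := by
    intro j
    by_cases hjc : encode j ≤ c
    · by_cases hj : j = i₀
      · subst hj
        simp [minSplit, hjc, (S j).mem_tail_append_iff (hz j), gap]
      · have hpos : minSplit c i₀ κ pos j =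
            ((pos j).1, (pos j).2 + (κ + if encode j < encode i₀ then 1 else 0)) := by
          simp [minSplit, hjc, hj, add_assoc]
        rw [hpos, (S j).mem_tail_add_iff (hz j)]
        change _ ≤ gap S pos z j ↔ _
        rw [← hlex j hj]
        simp [hj, hjc]
    · simp [minSplit, hjc, hz j]
  simp only [box, Set.mem_ofPred_eq, hcoord, IsLexMin]
  constructor
  · intro h
    refine ⟨(h i₀ hi₀).1 rfl, hi₀, fun j hj => ?_⟩
    rw [(h i₀ hi₀).1 rfl]
    by_cases hji : j = i₀
    · rw [hji, (h i₀ hi₀).1 rfl]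
    · exact (h j hj).2 hji
  · rintro ⟨hκ, -, hmin⟩ j hj
    exact ⟨fun hji => hji ▸ hκ, fun _ => hκ ▸ hmin j hj⟩

lemma tail_minSplit_subset {c : ℕ} {i₀ i : Option ι} (hi : encode i ≤ c) (κ : ℕ)
    (pos : Option ι → List ℕ × ℕ) :
    (S i).tail (minSplit c i₀ κ pos i) ⊆ (S i).tail ((pos i).1, (pos i).2 + κ) := by
  simp only [minSplit, if_pos hi]
  split_ifs
  · exact (S i).tail_append_subset_tail le_rfl
  all_goals exact (S i).tail_subset_tail (by omega)

lemma box_step_subset (σ : Config ι) (k : ℕ) : box S (step σ k).pos ⊆ box S σ.pos := by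
  refine box_mono fun i => ?_
  simp only [step]
  split_ifs
  · by_cases hi : encode i ≤ σ.clock.1
    · exact (tail_minSplit_subset hi _ _).trans ((S i).tail_subset_tail (Nat.le_add_right _ _))
    · simp [minSplit, hi]
  · dsimp only
    by_cases hi : i = target ι σ.clock.1 σ.star σ.clock.2
    · rw [descend, hi, Function.update_self]
      exact (S _).tail_append_subset_tail (Nat.le_add_right _ _)
    · rw [descend, Function.update_of_ne hi]

lemma exists_mem_box_step (σ : Config ι) {z : ∀ i, Z i} (hz : z ∈ box S σ.pos) :
    ∃ k, z ∈ box S (step σ k).pos := by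
  rcases hclk : σ.clock with ⟨c, q⟩
  rcases eq_or_ne q 0 with rfl | hq
  · obtain ⟨i₀, hi₀⟩ := exists_isLexMin c (gap S σ.pos z)
    obtain ⟨m, hm, hmi⟩ := exists_target_zero_eq hi₀.1
    refine ⟨m + width ι c * gap S σ.pos z i₀, ?_⟩
    have hw := width_pos (ι := ι) c
    rw [(step_of_phase_eq_zero hclk _).2, Nat.add_mul_mod_self_left, Nat.mod_eq_of_lt hm,
      Nat.add_mul_div_left _ _ hw, Nat.div_eq_of_lt hm, zero_add, hmi,
      mem_box_minSplit hz hi₀.1]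
    exact ⟨rfl, hi₀⟩
  · refine ⟨gap S σ.pos z (target ι c σ.star q), ?_⟩
    rw [(step_of_phase_ne_zero hclk hq _).2, mem_box_descend hz]

lemma disjoint_box_step (σ : Config ι) {k k' : ℕ} (hk : k ≠ k') :
    Disjoint (box S (step σ k).pos) (box S (step σ k').pos) := by
  refine Set.disjoint_left.2 fun z hz hz' => hk ?_
  have hz₀ := box_step_subset σ k hz
  rcases hclk : σ.clock with ⟨c, q⟩
  rcases eq_or_ne q 0 with rfl | hq
  · have hw := width_pos (ι := ι) c
    rw [(step_of_phase_eq_zero hclk _).2, mem_box_minSplit hz₀ (encode_target_le _ _ _)] at hz hz'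
    have hmod := target_zero_injOn (Nat.mod_lt k hw) (Nat.mod_lt k' hw) (hz.2.unique hz'.2)
    have hdiv : k / width ι c = k' / width ι c := by
      rw [← hz.1, ← hz'.1, hz.2.unique hz'.2]
    rw [← Nat.div_add_mod k (width ι c), ← Nat.div_add_mod k' (width ι c), hmod, hdiv]
  · rw [(step_of_phase_ne_zero hclk hq _).2, mem_box_descend hz₀] at hz hz'
    exact hz.symm.trans hz'

lemma box_config_subset_of_prefix {a b : List ℕ} (h : a <+: b) :
    box S (config ι b).pos ⊆ box S (config ι a).pos :=
  subset_of_prefix_of_append_singleton_subset (L := fun a => box S (config ι a).pos)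
    (fun a k => by rw [config_append_singleton]; exact box_step_subset _ k) h

lemma isOpen_box_config (a : List ℕ) : IsOpen (box S (config ι a).pos) := by
  have hbox : box S (config ι a).pos =
      (↑(active ι (config ι a).clock.1) : Set (Option ι)).pi
        fun i => (S i).tail ((config ι a).pos i) := by
    ext z
    simp only [box, Set.mem_ofPred_eq, Set.mem_pi, Finset.mem_coe, mem_active]
    refine ⟨fun h i _ => h i, fun h i => ?_⟩
    by_cases hi : encode i ≤ (config ι a).clock.1
    · exact h i hi
    · rw [pos_config_of_lt (by omega), BaireScheme.tail_zero, BaireScheme.leaf_nil]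
      trivial
  rw [hbox]
  exact isOpen_set_pi (Finset.finite_toSet _) fun i _ => (S i).isOpen_tail _

lemma le_cycleStart (c : ℕ) : c ≤ cycleStart ι c := by
  induction c with
  | zero => exact le_rfl
  | succ c ih => have := width_pos (ι := ι) c; rw [cycleStart]; omega

lemma box_config_of_cycleStart {a : List ℕ} {c : ℕ} (ha : a.length = cycleStart ι c) :
    box S (config ι a).pos = {z | ∀ i, z i ∈ (S i).leaf ((config ι a).pos i).1} := by
  ext z
  refine forall_congr' fun i => ?_
  rw [← BaireScheme.tail_zero, ← (config_cycleStart ha i).1]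

lemma iInter_box_config_eq_singleton (g : ℕ → ℕ) :
    ∃ z, ⋂ n, box S (config ι ((List.range n).map g)).pos = {z} := by
  set a : ℕ → List ℕ := fun c => (List.range (cycleStart ι c)).map g
  have ha : ∀ c, (a c).length = cycleStart ι c := fun c => by simp [a]
  have hchain : ∀ i c, ((config ι (a c)).pos i).1 <+: ((config ι (a (c + 1))).pos i).1 := by
    intro i c
    obtain ⟨t, ht⟩ : a c <+: a (c + 1) := List.map_range_prefix_map_range g (by simp [cycleStart])
    have htlen : t.length = width ι c := by
      have := congrArg List.length ht
      simp only [List.length_append, ha, cycleStart] at this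
      omega
    exact ht ▸ pos_config_prefix_of_cycle (ha c) htlen i
  have hpt : ∀ i, ∃ x, ⋂ c, (S i).leaf ((config ι (a c)).pos i).1 = {x} := fun i =>
    (S i).exists_iInter_eq_singleton (hchain i)
      fun n => ⟨n + encode i, by rw [(config_cycleStart (ha _) i).2]; omega⟩
  choose pt hpt using hpt
  have hleaf := fun c => box_config_of_cycleStart (S := S) (ha c)
  refine ⟨pt, subset_antisymm (fun z hz => ?_) fun z hz => ?_⟩
  · funext i
    have : z i ∈ ⋂ c, (S i).leaf ((config ι (a c)).pos i).1 :=
      mem_iInter.2 fun c => (hleaf c ▸ mem_iInter.1 hz (cycleStart ι c)) i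
    rwa [hpt i] at this
  · rw [mem_singleton_iff.1 hz]
    refine mem_iInter.2 fun n => box_config_subset_of_prefix
      (List.map_range_prefix_map_range g (le_cycleStart (ι := ι) n)) ?_
    rw [hleaf n]
    intro i
    have : pt i ∈ ⋂ c, (S i).leaf ((config ι (a c)).pos i).1 := (hpt i).symm ▸ rfl
    exact mem_iInter.1 this n

end Leaves

def prodScheme (S : ∀ i, BaireScheme (Z i)) : BaireScheme (∀ i, Z i) where
  leaf a := box S (config ι a).pos
  leaf_nil := by
    ext z
    simp [box, config, BaireScheme.tail_zero, BaireScheme.leaf_nil]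
  isOpen_leaf := isOpen_box_config
  leaf_eq_iUnion a := by
    refine subset_antisymm (fun z hz => ?_) (iUnion_subset fun k => ?_)
    · obtain ⟨k, hk⟩ := exists_mem_box_step _ hz
      exact mem_iUnion.2 ⟨k, by rwa [config_append_singleton]⟩
    · rw [config_append_singleton]
      exact box_step_subset _ k
  disjoint_leaf a j k h := by
    simp only [config_append_singleton]
    exact disjoint_box_step _ h
  iInter_eq_singleton := iInter_box_config_eq_singleton

variable {S : ∀ i, BaireScheme (Z i)}

lemma pos_config_node_cycleStart (p : ∀ i, Z i) (c : ℕ) (i : Option ι) :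
    (config ι ((prodScheme S).node p (cycleStart ι c))).pos i =
      ((S i).node (p i) (c - encode i), 0) := by
  have hlen : ((prodScheme S).node p (cycleStart ι c)).length = cycleStart ι c := by simp
  obtain ⟨h₀, hl⟩ := config_cycleStart hlen i
  have hp : p i ∈ (S i).tail ((config ι ((prodScheme S).node p (cycleStart ι c))).pos i) :=
    (prodScheme S).mem_leaf_node p _ i
  rw [← Prod.mk.eta (p := (config ι _).pos i), h₀, BaireScheme.tail_zero,
    BaireScheme.mem_leaf_iff, hl] at hp
  rw [← Prod.mk.eta (p := (config ι _).pos i), h₀, hp]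

lemma shootsInto_of_cycleStart {a : List ℕ} {c : ℕ} (ha : a.length = cycleStart ι c)
    {I : Set (Option ι)} (hI : I.Finite) (hIc : ∀ i ∈ I, encode i ≤ c) {t : ∀ i, Set (Z i)}
    (ht : ∀ i ∈ I, (S i).ShootsInto ((config ι a).pos i).1 (t i)) :
    (prodScheme S).ShootsInto a (I.pi t) := by
  have hev : ∀ᶠ s in atTop, ∀ i ∈ I, (S i).tail (((config ι a).pos i).1, s) ⊆ t i :=
    (eventually_all_finite hI).2 fun i hi => (ht i hi).eventually_tail_subset
  filter_upwards [(Nat.tendsto_div_const_atTop (width_pos (ι := ι) c).ne').eventually hev]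
    with k hk z hz i hi
  change z ∈ box S (config ι (a ++ [k])).pos at hz
  rw [config_append_singleton, (step_of_phase_eq_zero (clock_config_eq (q := 0) ha
    (width_pos c)) k).2] at hz
  have hsub := tail_minSplit_subset (S := S) (i₀ := target ι c (k % width ι c) 0) (hIc i hi)
    (k / width ι c) (config ι a).pos
  rw [(config_cycleStart ha i).1, zero_add] at hsub
  exact hk i hi (hsub (hz i))

theorem grows_prodScheme (h₀ : (S none).Grows) (hS : ∀ l, (S (some l)).GrowsEventually) :
    (prodScheme S).Grows := by
  intro p U hU
  rw [nhds_pi, Filter.mem_pi] at hU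
  obtain ⟨I, hI, t, ht, hIU⟩ := hU
  have hgood : ∀ i ∈ I, ∀ᶠ c in atTop, i ≠ none →
      encode i ≤ c ∧ (S i).ShootsInto ((S i).node (p i) (c - encode i)) (t i) := by
    rintro (_ | l) -
    · exact Eventually.of_forall fun _ h => absurd rfl h
    · filter_upwards [eventually_ge_atTop (encode (some l)),
        (tendsto_sub_atTop_nat _).eventually (hS l (p (some l)) (t (some l)) (ht _))]
        with c h₁ h₂ _ using ⟨h₁, h₂⟩
  obtain ⟨c, hc₀, hc⟩ :=
    ((h₀.frequently (ht none)).and_eventually ((eventually_all_finite hI).2 hgood)).exists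
  have hcI : ∀ i ∈ I, encode i ≤ c ∧ (S i).ShootsInto ((S i).node (p i) (c - encode i)) (t i) := by
    rintro (_ | l) hi
    · exact ⟨by simp, by simpa using hc₀⟩
    · exact hc _ hi (by simp)
  refine ⟨cycleStart ι c, (shootsInto_of_cycleStart (by simp) hI (fun i hi => (hcI i hi).1)
    fun i hi => ?_).mono hIU⟩
  rw [pos_config_node_cycleStart]
  exact (hcI i hi).2

end

end ProductScheme

section OptionFamily

variable {Λ : Type*} (Y : Type u) (X : Λ → Type u)

/-- `Y` and the `X l` as one family indexed by `Option Λ`. -/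
def optionFamily : Option Λ → Type u
  | none => Y
  | some l => X l

variable {Y X} [TopologicalSpace Y] [∀ l, TopologicalSpace (X l)]

instance : ∀ i, TopologicalSpace (optionFamily Y X i)
  | none => inferInstanceAs (TopologicalSpace Y)
  | some l => inferInstanceAs (TopologicalSpace (X l))

def Homeomorph.prodPiOption : Y × (∀ l, X l) ≃ₜ ∀ i, optionFamily Y X i where
  toEquiv := (Equiv.piOptionEquivProd (β := optionFamily Y X)).symm
  continuous_toFun := continuous_pi fun i => match i with
    | none => continuous_fst
    | some l => (continuous_apply l).comp continuous_snd
  continuous_invFun :=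
    (continuous_apply none).prodMk (continuous_pi fun l => continuous_apply (some l))

end OptionFamily

theorem product_with_piTree_space_has_piTree_general
    {Λ : Type} [Countable Λ]
    {X : Λ → Type u} [∀ l, TopologicalSpace (X l)]
    (H : ∀ l, FoliageTree (X l)) (hH : ∀ l, (H l).IsPiTree)
    (hcof : ∀ l, PiRefines (cofin Set.univ) ((H l).Rise))
    {Y : Type u} [TopologicalSpace Y] (hY : ∃ G : FoliageTree Y, G.IsPiTree) :
    ∃ G : FoliageTree (Y × ∀ l, X l), G.IsPiTree := by
  let _ := Encodable.ofCountable Λ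
  obtain ⟨G, hG⟩ := hY
  let S : ∀ i, BaireScheme (optionFamily Y X i) := fun i => match i with
    | none => BaireScheme.ofBaireFoliageTree G hG.1
    | some l => BaireScheme.ofBaireFoliageTree (H l) (hH l).1
  have hgrows : (ProductScheme.prodScheme S).Grows :=
    ProductScheme.grows_prodScheme (BaireScheme.grows_ofBaireFoliageTree hG)
      fun l => BaireScheme.growsEventually_ofBaireFoliageTree (hH l) (hcof l)
  exact ⟨_, BaireScheme.isPiTree_toFoliageTree (hgrows.comap Homeomorph.prodPiOption)⟩

/-- Corollary: product with a space having a π-tree, when each factor has a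
π-tree whose Rise family is π-refined by the cofinite sets. -/
theorem product_with_piTree_space_has_piTree
    {Λ : Type} [Countable Λ] [Nonempty Λ]
    {X : Λ → Type u} [∀ l, TopologicalSpace (X l)]
    (H : ∀ l, FoliageTree (X l)) (hH : ∀ l, (H l).IsPiTree)
    (hcof : ∀ l, PiRefines (cofin Set.univ) ((H l).Rise))
    {Y : Type u} [TopologicalSpace Y] (hY : ∃ G : FoliageTree Y, G.IsPiTree) :
    ∃ G : FoliageTree (Y × ∀ l, X l), G.IsPiTree :=
  product_with_piTree_space_has_piTree_general H hH hcof hY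
end

section
/- Suppose that Λ is either a natural number ≥ 2 or ω, and for each n ∈ Λ, δ_n is a nonempty family of nonempty subsets of ω with ⋂ δ_n = ∅. Suppose also that δ_0 has the finite intersection property and that for each n ∈ Λ with n ≠ 0 there is a family γ_n of subsets of ω such that |γ_n| ≤ ω, γ_n has the finite intersection property, and γ_n ≫ δ_n. Then there exists a sequence ⟨α_n⟩_{n∈Λ} of strictly increasing functions α_n : ω → ω such that: whenever k ∈ Λ and for each i ≤ k the set A_i is the image α_i[D] of some D ∈ δ_i, the intersection ⋂_{i≤k} A_i is infinite. -/
open Set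

universe u v

/-! Each `δ n` with `n ≠ 0` is shadowed by a countable FIP family `γ n` all of whose finite
intersections are infinite (a finite one could be killed by finitely many more members, since
`⋂₀ δ n = ∅`), so there is a strictly increasing `e n` that eventually lies in every member of
`δ n`; put `e 0 = id`. Let `z j = ∑_{m ≤ j} e m j`. For `j ≥ n` the gap `z j - e n j` is
monotone, which lets us interpolate a strictly increasing `α n` with `α n (e n j) = z j`.
For `D i ∈ δ i` and all `j` in the infinite set `D 0` with finitely many exceptions,
`z j = α i (e i j) ∈ α i '' D i` for every `i ≤ k`. -/

theorem HasFIP.sInter_infinite_of_piRefines {α : Type*} {γ δ : Set (Set α)} (hγ : HasFIP γ)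
    (hγδ : PiRefines γ δ) (hδ : ∀ D ∈ δ, D.Nonempty) (hδ_sInter : ⋂₀ δ = ∅)
    {t : Set (Set α)} (htγ : t ⊆ γ) (ht : t.Finite) (ht_ne : t.Nonempty) :
    (⋂₀ t).Infinite := by
  intro hfin
  have hmiss : ∀ x : α, ∃ G ∈ γ, x ∉ G := by
    intro x
    have hx : x ∉ ⋂₀ δ := hδ_sInter ▸ Set.notMem_empty x
    obtain ⟨D, hD, hxD⟩ : ∃ D ∈ δ, x ∉ D := by simpa [Set.mem_sInter] using hx
    obtain ⟨G, hG, -, hGD⟩ := hγδ D hD (hδ D hD)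
    exact ⟨G, hG, fun hxG => hxD (hGD hxG)⟩
  choose G hGγ hxG using hmiss
  obtain ⟨y, hy⟩ := hγ (t ∪ G '' ⋂₀ t)
    (Set.union_subset htγ (Set.image_subset_iff.2 fun x _ => hGγ x))
    (ht.union (hfin.image G)) (ht_ne.mono Set.subset_union_left)
  have hyt : y ∈ ⋂₀ t := fun A hA => hy A (Or.inl hA)
  exact hxG y (hy (G y) (Or.inr ⟨y, hyt, rfl⟩))

open Filter in
theorem exists_strictMono_eventually_mem_of_countable {γ : Set (Set ℕ)} (hγ : γ.Countable)
    (hγ_inf : ∀ t ⊆ γ, t.Finite → t.Nonempty → (⋂₀ t).Infinite) :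
    ∃ e : ℕ → ℕ, StrictMono e ∧ ∀ G ∈ γ, ∀ᶠ j in atTop, e j ∈ G := by
  rcases γ.eq_empty_or_nonempty with rfl | hγ_ne
  · exact ⟨id, strictMono_id, by simp⟩
  obtain ⟨g, rfl⟩ := hγ.exists_eq_range hγ_ne
  have hx : ∀ j, ∃ x ∈ ⋂₀ (g '' Set.Iic j), j < x := fun j =>
    (hγ_inf _ (Set.image_subset_range _ _) ((Set.finite_Iic j).image g)
      ⟨g j, Set.mem_image_of_mem g (Set.mem_Iic.2 le_rfl)⟩).exists_gt j
  choose x hxg hjx using hx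
  obtain ⟨φ, hφ, hxφ⟩ := strictMono_subseq_of_id_le fun j => (hjx j).le
  refine ⟨x ∘ φ, hxφ, Set.forall_mem_range.2 fun m =>
    eventually_atTop.2 ⟨m, fun j hj => ?_⟩⟩
  exact hxg (φ j) (g m) ⟨m, hj.trans (hφ.id_le j), rfl⟩

open Filter in
theorem HasFIP.exists_strictMono_eventually_mem {γ δ : Set (Set ℕ)} (hγ : HasFIP γ)
    (hγc : γ.Countable) (hγδ : PiRefines γ δ) (hδ : ∀ D ∈ δ, D.Nonempty)
    (hδ_sInter : ⋂₀ δ = ∅) :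
    ∃ e : ℕ → ℕ, StrictMono e ∧ ∀ D ∈ δ, ∀ᶠ j in atTop, e j ∈ D := by
  obtain ⟨e, he, heγ⟩ := exists_strictMono_eventually_mem_of_countable hγc
    fun _ => hγ.sInter_infinite_of_piRefines hγδ hδ hδ_sInter
  refine ⟨e, he, fun D hD => ?_⟩
  obtain ⟨G, hG, -, hGD⟩ := hγδ D hD (hδ D hD)
  exact (heγ G hG).mono fun j hj => hGD hj

theorem HasFIP.infinite_of_mem {δ : Set (Set ℕ)} (hδ_fip : HasFIP δ)
    (hδ : ∀ D ∈ δ, D.Nonempty) (hδ_sInter : ⋂₀ δ = ∅) {D : Set ℕ} (hD : D ∈ δ) :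
    D.Infinite := by
  simpa using hδ_fip.sInter_infinite_of_piRefines (fun E hE hE' => ⟨E, hE, hE', subset_rfl⟩)
    hδ hδ_sInter (Set.singleton_subset_iff.2 hD) (Set.finite_singleton D)
    (Set.singleton_nonempty D)

/-- The map is `x ↦ x + (z j - e j)`, where `j ≥ N` is least with `x ≤ e j`. -/
theorem exists_strictMono_comp_eq {e z : ℕ → ℕ} (he : StrictMono e) (N : ℕ)
    (hez : ∀ j, N ≤ j → e j ≤ z j)
    (hgap : MonotoneOn (fun j => z j - e j) (Set.Ici N)) :
    ∃ α : ℕ → ℕ, StrictMono α ∧ ∀ j, N ≤ j → α (e j) = z j := by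
  have hex : ∀ x, ∃ j, N ≤ j ∧ x ≤ e j := fun x =>
    ⟨max N x, le_max_left N x, (le_max_right N x).trans (he.id_le _)⟩
  set J : ℕ → ℕ := fun x => Nat.find (hex x)
  have hJ_mono : Monotone J := fun x y hxy => Nat.find_min' (hex x)
    ⟨(Nat.find_spec (hex y)).1, hxy.trans (Nat.find_spec (hex y)).2⟩
  have hJ_e : ∀ j, N ≤ j → J (e j) = j := fun j hj =>
    le_antisymm (Nat.find_min' (hex (e j)) ⟨hj, le_rfl⟩)
      (he.le_iff_le.1 (Nat.find_spec (hex (e j))).2)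
  refine ⟨fun x => x + (z (J x) - e (J x)), fun x y hxy => ?_, fun j hj => ?_⟩
  · exact Nat.add_lt_add_of_lt_of_le hxy
      (hgap (Nat.find_spec (hex x)).1 (Nat.find_spec (hex y)).1 (hJ_mono hxy.le))
  · simp only [hJ_e j hj]
    have := hez j hj
    omega

def diagonalSum (f : ℕ → ℕ → ℕ) (j : ℕ) : ℕ := ∑ m ∈ Finset.range (j + 1), f m j

theorem le_diagonalSum (f : ℕ → ℕ → ℕ) {n j : ℕ} (hnj : n ≤ j) : f n j ≤ diagonalSum f j :=
  Finset.single_le_sum (f := fun m => f m j) (fun _ _ => Nat.zero_le _)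
    (Finset.mem_range.2 (Nat.lt_succ_of_le hnj))

theorem diagonalSum_sub_eq (f : ℕ → ℕ → ℕ) {n j : ℕ} (hnj : n ≤ j) :
    diagonalSum f j - f n j = ∑ m ∈ (Finset.range (j + 1)).erase n, f m j := by
  rw [diagonalSum, ← Finset.add_sum_erase _ _ (Finset.mem_range.2 (Nat.lt_succ_of_le hnj)),
    Nat.add_sub_cancel_left]

theorem monotoneOn_diagonalSum_sub {f : ℕ → ℕ → ℕ} (hf : ∀ m, Monotone (f m)) (n : ℕ) :
    MonotoneOn (fun j => diagonalSum f j - f n j) (Set.Ici n) := by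
  intro j hj j' hj' hjj'
  simp only [diagonalSum_sub_eq f hj, diagonalSum_sub_eq f hj']
  calc ∑ m ∈ (Finset.range (j + 1)).erase n, f m j
      ≤ ∑ m ∈ (Finset.range (j + 1)).erase n, f m j' :=
        Finset.sum_le_sum fun m _ => hf m hjj'
    _ ≤ ∑ m ∈ (Finset.range (j' + 1)).erase n, f m j' :=
        Finset.sum_le_sum_of_subset (Finset.erase_subset_erase _
          (Finset.range_subset_range.2 (Nat.succ_le_succ hjj')))

open Filter in
theorem iInter_image_infinite {α e : ℕ → ℕ → ℕ} {D : ℕ → Set ℕ} {k : ℕ}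
    (hα₀ : StrictMono (α 0)) (hαe : ∀ i, 1 ≤ i → ∀ j, i ≤ j → α i (e i j) = α 0 j)
    (hD₀ : (D 0).Infinite) (hD : ∀ i ∈ Finset.Icc 1 k, ∀ᶠ j in atTop, e i j ∈ D i) :
    (⋂ i ≤ k, α i '' D i).Infinite := by
  have hgood : ∀ᶠ j in atTop, ∀ i ∈ Finset.Icc 1 k, i ≤ j ∧ e i j ∈ D i :=
    (Finset.eventually_all _).2 fun i hi => (eventually_ge_atTop i).and (hD i hi)
  have hS : {j | j ∈ D 0 ∧ ∀ i ∈ Finset.Icc 1 k, i ≤ j ∧ e i j ∈ D i}.Infinite :=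
    Nat.frequently_atTop_iff_infinite.1
      ((Nat.frequently_atTop_iff_infinite.2 hD₀).and_eventually hgood)
  refine (hS.image hα₀.injective.injOn).mono ?_
  rintro _ ⟨j, ⟨hj₀, hj⟩, rfl⟩
  refine Set.mem_iInter₂.2 fun i hik => ?_
  rcases Nat.eq_zero_or_pos i with rfl | hi
  · exact ⟨j, hj₀, rfl⟩
  · obtain ⟨hij, hejD⟩ := hj i (Finset.mem_Icc.2 ⟨hi, hik⟩)
    exact ⟨e i j, hejD, hαe i hi j hij⟩

open Filter in
theorem exists_strictMono_shifts_general
    (Λ : Set ℕ) (hΛ : (∃ n, 2 ≤ n ∧ Λ = Set.Iio n) ∨ Λ = Set.univ)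
    (δ : ℕ → Set (Set ℕ))
    (hδmem : ∀ n ∈ Λ, ∀ D ∈ δ n, D.Nonempty)
    (hδint : ∀ n ∈ Λ, ⋂₀ δ n = ∅)
    (h0 : HasFIP (δ 0))
    (hγ : ∀ n ∈ Λ, n ≠ 0 →
      ∃ γ : Set (Set ℕ), γ.Countable ∧ HasFIP γ ∧ PiRefines γ (δ n)) :
    ∃ α : ℕ → ℕ → ℕ, (∀ n ∈ Λ, StrictMono (α n)) ∧
      ∀ k ∈ Λ, ∀ D : ℕ → Set ℕ, (∀ i ≤ k, D i ∈ δ i) →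
        (⋂ i ≤ k, (α i) '' (D i)).Infinite := by
  have hΛ_lower : IsLowerSet Λ := by
    rcases hΛ with ⟨N, -, rfl⟩ | rfl
    exacts [isLowerSet_Iio N, isLowerSet_univ]
  have he : ∀ n, ∃ e : ℕ → ℕ, StrictMono e ∧ (n = 0 → e = id) ∧
      (n ∈ Λ → n ≠ 0 → ∀ D ∈ δ n, ∀ᶠ j in atTop, e j ∈ D) := by
    intro n
    by_cases hn : n ∈ Λ ∧ n ≠ 0
    · obtain ⟨γ, hγc, hγfip, hγδ⟩ := hγ n hn.1 hn.2
      obtain ⟨e, he, heδ⟩ := hγfip.exists_strictMono_eventually_mem hγc hγδ (hδmem n hn.1)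
        (hδint n hn.1)
      exact ⟨e, he, fun h => absurd h hn.2, fun _ _ => heδ⟩
    · exact ⟨id, strictMono_id, fun _ => rfl, fun h h' => absurd ⟨h, h'⟩ hn⟩
  choose e he he0 heδ using he
  choose α hα hαe using fun n => exists_strictMono_comp_eq (he n) n
    (fun _ => le_diagonalSum e) (monotoneOn_diagonalSum_sub (fun m => (he m).monotone) n)
  refine ⟨α, fun n _ => hα n, fun k hk D hD => iInter_image_infinite (e := e) (hα 0) ?_ ?_ ?_⟩
  · intro i _ j hij
    rw [hαe i j hij, ← hαe 0 j (Nat.zero_le j), he0 0 rfl, id]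
  · exact h0.infinite_of_mem (hδmem 0 (hΛ_lower (Nat.zero_le k) hk))
      (hδint 0 (hΛ_lower (Nat.zero_le k) hk)) (hD 0 (Nat.zero_le k))
  · intro i hi
    obtain ⟨hi1, hik⟩ := Finset.mem_Icc.1 hi
    exact heδ i (hΛ_lower hik hk) (by omega) (D i) (hD i hik)

/-- Lemma on shifting filters (Lemma `lem.sdvig.filtrov` of the paper). -/
theorem exists_strictMono_shifts
    (Λ : Set ℕ) (hΛ : (∃ n, 2 ≤ n ∧ Λ = Set.Iio n) ∨ Λ = Set.univ)
    (δ : ℕ → Set (Set ℕ))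
    (hδne : ∀ n ∈ Λ, (δ n).Nonempty)
    (hδmem : ∀ n ∈ Λ, ∀ D ∈ δ n, D.Nonempty)
    (hδint : ∀ n ∈ Λ, ⋂₀ δ n = ∅)
    (h0 : HasFIP (δ 0))
    (hγ : ∀ n ∈ Λ, n ≠ 0 →
      ∃ γ : Set (Set ℕ), γ.Countable ∧ HasFIP γ ∧ PiRefines γ (δ n)) :
    ∃ α : ℕ → ℕ → ℕ, (∀ n ∈ Λ, StrictMono (α n)) ∧
      ∀ k ∈ Λ, ∀ D : ℕ → Set ℕ, (∀ i ≤ k, D i ∈ δ i) →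
        (⋂ i ≤ k, (α i) '' (D i)).Infinite :=
  exists_strictMono_shifts_general Λ hΛ δ hδmem hδint h0 hγ
end

section
/- For each Λ that is either a natural number ≥ 2 or ω, there is an indexed family ⟨a(n,v,i) : n ∈ ω, v ∈ ω^{2n}, i ∈ Λ∩(n+1)⟩ such that: (a1) a(n,v,i) ∈ ω^n for all n ∈ ω, v ∈ ω^{2n}, i ∈ Λ∩(n+1); and (a2) for all n ∈ ω, v ∈ ω^{2n}, and m ∈ ω, the set ((∏_{i∈Λ∩(n+1)} S̃^m_{a(n,v,i)}) \ (∏_{i∈Λ∩(n+1)} S̃^{m+1}_{a(n,v,i)})) · (ω^ω)^{Λ∩{n+1}} is equal to the pairwise disjoint union over l ∈ ω of the sets ∏_{i∈Λ∩(n+2)} S_{a(n+1, v⌢⟨m,l⟩, i)}. -/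
/-- The cylinder of all infinite extensions of a finite sequence
`x ∈ ω^{<ω}`. -/
def cyl (x : List ℕ) : Set (ℕ → ℕ) := {p | ∀ j : Fin x.length, p j = x.get j}

/-- `cylT x m = ⋃ {cyl (x ⌢ ⟨l⟩) : l ≥ m}` (the set `S̃^m_x` of the paper). -/
def cylT (x : List ℕ) (m : ℕ) : Set (ℕ → ℕ) := ⋃ l ∈ {l : ℕ | m ≤ l}, cyl (x ++ [l])

/-!
For `p` in the difference set `∏ S̃^m_{a_i} \ ∏ S̃^{m+1}_{a_i}` every entry `p_i(n)` is at least `m`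
and one of them equals `m`. Above the base cylinders, `p` is therefore pinned down by the offsets
`p_i(n) - m`, at least one of which vanishes, and by the first `n + 1` entries of the coordinate
that enters at the next level. These data range over a countably infinite set, which is where
`|Λ| ≥ 2` is needed, so an enumeration of them by `ℕ` yields the disjoint pieces, and iterating
this refinement defines the family `a`.
-/

open Set Function

section Cylinders

variable {p : ℕ → ℕ} {x : List ℕ}

theorem mem_cyl_iff : p ∈ cyl x ↔ ∀ (j : ℕ) (h : j < x.length), p j = x[j] :=
  ⟨fun hp j h => hp ⟨j, h⟩, fun hp j => hp j j.isLt⟩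

theorem mem_cyl_append_singleton {l : ℕ} :
    p ∈ cyl (x ++ [l]) ↔ p ∈ cyl x ∧ p x.length = l := by
  simp only [mem_cyl_iff, List.length_append, List.length_singleton, Nat.lt_succ_iff_lt_or_eq]
  constructor
  · intro hp
    refine ⟨fun j hj => ?_, ?_⟩
    · simpa [List.getElem_append_left hj] using hp j (Or.inl hj)
    · simpa using hp x.length (Or.inr rfl)
  · rintro ⟨hx, hl⟩ j (hj | rfl)
    · simpa [List.getElem_append_left hj] using hx j hj
    · simpa using hl

theorem mem_cylT {m : ℕ} : p ∈ cylT x m ↔ p ∈ cyl x ∧ m ≤ p x.length := by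
  simp only [cylT, mem_iUnion, mem_ofPred_eq, exists_prop, mem_cyl_append_singleton]
  exact ⟨fun ⟨_, hm, hx, rfl⟩ => ⟨hx, hm⟩, fun ⟨hx, hm⟩ => ⟨_, hm, hx, rfl⟩⟩

theorem mem_cyl_ofFn {s : ℕ} {f : Fin s → ℕ} :
    p ∈ cyl (List.ofFn f) ↔ ∀ j : Fin s, p j = f j := by
  simp only [mem_cyl_iff, List.length_ofFn, List.getElem_ofFn]
  exact ⟨fun hp j => hp j j.isLt, fun hp j hj => hp ⟨j, hj⟩⟩

end Cylinders

/-- The data singling out one piece of a refinement step: the offsets `k i = p i n - m` of the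
old coordinates `i < t`, at least one of which vanishes, and the initial segments of length `s`
of the new coordinates `t ≤ i < t'`. -/
def StepIndex (s t t' : ℕ) : Type :=
  {k : Fin t → ℕ // ∃ i, k i = 0} × (Ico t t' → Fin s → ℕ)

namespace StepIndex

variable {s t t' : ℕ}

instance : Countable (StepIndex s t t') := by unfold StepIndex; infer_instance

theorem infinite (ht : 1 ≤ t) (h : 2 ≤ t ∨ t < t' ∧ 1 ≤ s) : Infinite (StepIndex s t t') := by
  unfold StepIndex
  rcases h with h | ⟨htt, hs⟩
  · have : Infinite {k : Fin t → ℕ // ∃ i, k i = 0} :=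
      Infinite.of_injective
        (fun m => ⟨fun j => if (j : ℕ) = 1 then m else 0, ⟨⟨0, by omega⟩, by simp⟩⟩)
        (fun m m' hm => by simpa using congr_arg (fun k => k.1 ⟨1, h⟩) hm)
    exact Prod.infinite_of_left
  · have : Nonempty {k : Fin t → ℕ // ∃ i, k i = 0} := ⟨⟨fun _ => 0, ⟨0, by omega⟩, rfl⟩⟩
    have : Nonempty (Ico t t') := ⟨⟨t, le_rfl, htt⟩⟩
    have : Nonempty (Fin s) := ⟨⟨0, hs⟩⟩
    exact Prod.infinite_of_right

end StepIndex

def nextFamily {s t t' : ℕ} (c : ℕ → List ℕ) (m : ℕ) (d : StepIndex s t t') (i : ℕ) :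
    List ℕ :=
  if h : i < t then c i ++ [m + d.1.1 ⟨i, h⟩]
  else if h' : i < t' then List.ofFn (d.2 ⟨i, not_lt.1 h, h'⟩)
  else []

section NextFamily

variable {s t t' : ℕ} {c : ℕ → List ℕ} {m : ℕ} {d : StepIndex s t t'} {p : ℕ → ℕ → ℕ}

theorem nextFamily_of_lt {i : ℕ} (h : i < t) :
    nextFamily c m d i = c i ++ [m + d.1.1 ⟨i, h⟩] :=
  dif_pos h

theorem nextFamily_of_mem_Ico {i : ℕ} (h : i ∈ Ico t t') :
    nextFamily c m d i = List.ofFn (d.2 ⟨i, h⟩) :=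
  (dif_neg (not_lt.2 h.1)).trans (dif_pos h.2)

theorem length_nextFamily {n : ℕ} {d : StepIndex (n + 1) t t'} (hc : ∀ i < t, (c i).length = n)
    {i : ℕ} (hi : i < t') : (nextFamily c m d i).length = n + 1 := by
  by_cases h : i < t
  · simp [nextFamily_of_lt h, hc i h]
  · simp [nextFamily_of_mem_Ico ⟨not_lt.1 h, hi⟩]

theorem mem_pi_cyl_nextFamily (htt : t ≤ t') :
    p ∈ pi (Iio t') (fun i => cyl (nextFamily c m d i)) ↔
      (∀ i (h : i < t), p i ∈ cyl (c i) ∧ p i (c i).length = m + d.1.1 ⟨i, h⟩) ∧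
        ∀ i (h : i ∈ Ico t t') (j : Fin s), p i j = d.2 ⟨i, h⟩ j := by
  constructor
  · intro hp
    refine ⟨fun i h => ?_, fun i h => ?_⟩
    · simpa only [nextFamily_of_lt h, mem_cyl_append_singleton] using hp i (h.trans_le htt)
    · simpa only [nextFamily_of_mem_Ico h, mem_cyl_ofFn] using hp i h.2
  · rintro ⟨hlt, hIco⟩ i (hi : i < t')
    dsimp only
    by_cases h : i < t
    · rw [nextFamily_of_lt h, mem_cyl_append_singleton]
      exact hlt i h
    · rw [nextFamily_of_mem_Ico ⟨not_lt.1 h, hi⟩, mem_cyl_ofFn]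
      exact hIco i _

theorem diff_pi_cylT_eq_iUnion (htt : t ≤ t') :
    pi (Iio t) (fun i => cylT (c i) m) \ pi (Iio t) (fun i => cylT (c i) (m + 1)) =
      ⋃ d : StepIndex s t t', pi (Iio t') (fun i => cyl (nextFamily c m d i)) := by
  ext p
  simp only [mem_sdiff, mem_pi, mem_Iio, mem_cylT, mem_iUnion, mem_pi_cyl_nextFamily htt]
  constructor
  · rintro ⟨hm, hm1⟩
    push Not at hm1
    obtain ⟨i₀, hi₀, hi₀m⟩ := hm1
    refine ⟨⟨⟨fun i => p i (c i).length - m, ⟨i₀, hi₀⟩, ?_⟩, fun i j => p i j⟩,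
      fun i h => ⟨(hm i h).1, ?_⟩, fun i h j => rfl⟩
    · have hge := (hm i₀ hi₀).2
      have hlt := hi₀m (hm i₀ hi₀).1
      dsimp only
      omega
    · have := (hm i h).2
      dsimp only
      omega
  · rintro ⟨d, hlt, -⟩
    refine ⟨fun i h => ⟨(hlt i h).1, by have := (hlt i h).2; omega⟩, fun hm1 => ?_⟩
    obtain ⟨⟨i₀, hi₀⟩, hzero⟩ := d.1.2
    have := (hm1 i₀ hi₀).2
    have := (hlt i₀ hi₀).2
    omega

theorem pairwise_disjoint_pi_cyl_nextFamily (htt : t ≤ t') :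
    Pairwise (Disjoint on fun d : StepIndex s t t' =>
      pi (Iio t') (fun i => cyl (nextFamily c m d i))) := by
  intro d d' hdd'
  refine disjoint_left.2 fun p hp hp' => hdd' ?_
  rw [mem_pi_cyl_nextFamily htt] at hp hp'
  refine Prod.ext (Subtype.ext (funext fun ⟨i, h⟩ => ?_)) (funext fun ⟨i, h⟩ => funext fun j => ?_)
  · have := (hp.1 i h).2
    have := (hp'.1 i h).2
    omega
  · exact (hp.2 i h j).symm.trans (hp'.2 i h j)

end NextFamily

section Construction

variable {u : ℕ → ℕ} (e : ∀ n, ℕ ≃ StepIndex (n + 1) (u n) (u (n + 1)))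

/-- The code `w = v ⌢ ⟨m, l⟩` selects the `l`-th piece of the partition of the `m`-th difference
set of level `n` along `v`. -/
def cylinderFamily : ℕ → List ℕ → ℕ → List ℕ
  | 0, _ => fun _ => []
  | n + 1, w => nextFamily (cylinderFamily n (w.take (2 * n))) (w.getD (2 * n) 0)
      (e n (w.getD (2 * n + 1) 0))

theorem cylinderFamily_succ_append {n : ℕ} {v : List ℕ} (hv : v.length = 2 * n) (m l : ℕ) :
    cylinderFamily e (n + 1) (v ++ [m, l]) = nextFamily (cylinderFamily e n v) m (e n l) := by
  simp [cylinderFamily, ← hv]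

theorem length_cylinderFamily (n : ℕ) (w : List ℕ) {i : ℕ} (hi : i < u n) :
    (cylinderFamily e n w i).length = n := by
  induction n generalizing w i with
  | zero => rfl
  | succ n ih => exact length_nextFamily (fun i hi => ih _ hi) hi

end Construction

theorem exists_coherent_cylinder_family_of_Iio {u : ℕ → ℕ} (hu : Monotone u)
    (hpos : ∀ n, 1 ≤ u n) (hgrow : ∀ n, 2 ≤ u n ∨ u n < u (n + 1)) :
    ∃ a : ℕ → List ℕ → ℕ → List ℕ,
      (∀ n v, ∀ i < u n, (a n v i).length = n) ∧
      ∀ n v, v.length = 2 * n → ∀ m,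
        pi (Iio (u n)) (fun i => cylT (a n v i) m) \
            pi (Iio (u n)) (fun i => cylT (a n v i) (m + 1)) =
          ⋃ l, pi (Iio (u (n + 1))) (fun i => cyl (a (n + 1) (v ++ [m, l]) i)) ∧
        Pairwise (Disjoint on fun l =>
          pi (Iio (u (n + 1))) (fun i => cyl (a (n + 1) (v ++ [m, l]) i))) := by
  have e n : ℕ ≃ StepIndex (n + 1) (u n) (u (n + 1)) :=
    have := StepIndex.infinite (hpos n) ((hgrow n).imp_right fun h => ⟨h, n.succ_pos⟩)
    nonempty_equiv_of_countable.some
  refine ⟨cylinderFamily e, fun n v i => length_cylinderFamily e n v, fun n v hv m => ?_⟩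
  simp only [cylinderFamily_succ_append e hv]
  exact ⟨(diff_pi_cylT_eq_iUnion (hu n.le_succ)).trans ((e n).surjective.iUnion_comp _).symm,
    (pairwise_disjoint_pi_cyl_nextFamily (hu n.le_succ)).comp_of_injective (e n).injective⟩

/-- Subsets of `^{I}(ω^ω)` for `I ⊆ ℕ` are encoded as subsets of `ℕ → (ℕ → ℕ)` constrained only
on the coordinates in `I`. -/
theorem exists_coherent_cylinder_family
    (Λ : Set ℕ) (hΛ : (∃ k, 2 ≤ k ∧ Λ = Set.Iio k) ∨ Λ = Set.univ) :
    ∃ a : ℕ → List ℕ → ℕ → List ℕ,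
      (∀ (n : ℕ) (v : List ℕ), v.length = 2 * n →
        ∀ i ∈ Λ ∩ Set.Iio (n + 1), (a n v i).length = n) ∧
      (∀ (n : ℕ) (v : List ℕ), v.length = 2 * n → ∀ m : ℕ,
        (({p : ℕ → ℕ → ℕ | ∀ i ∈ Λ ∩ Set.Iio (n + 1), p i ∈ cylT (a n v i) m} \
            {p : ℕ → ℕ → ℕ | ∀ i ∈ Λ ∩ Set.Iio (n + 1), p i ∈ cylT (a n v i) (m + 1)}) =
          ⋃ l : ℕ, {p : ℕ → ℕ → ℕ | ∀ i ∈ Λ ∩ Set.Iio (n + 2),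
            p i ∈ cyl (a (n + 1) (v ++ [m, l]) i)}) ∧
        ∀ l l' : ℕ, l ≠ l' →
          Disjoint
            {p : ℕ → ℕ → ℕ | ∀ i ∈ Λ ∩ Set.Iio (n + 2),
              p i ∈ cyl (a (n + 1) (v ++ [m, l]) i)}
            {p : ℕ → ℕ → ℕ | ∀ i ∈ Λ ∩ Set.Iio (n + 2),
              p i ∈ cyl (a (n + 1) (v ++ [m, l']) i)}) := by
  obtain ⟨u, hΛu, hu, hpos, hgrow⟩ : ∃ u : ℕ → ℕ, (∀ n, Λ ∩ Iio (n + 1) = Iio (u n)) ∧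
      Monotone u ∧ (∀ n, 1 ≤ u n) ∧ ∀ n, 2 ≤ u n ∨ u n < u (n + 1) := by
    rcases hΛ with ⟨k, hk, rfl⟩ | rfl
    · refine ⟨fun n => min k (n + 1), fun n => Iio_inter_Iio, fun a b hab => ?_, fun n => ?_,
        fun n => ?_⟩ <;> dsimp only <;> omega
    · exact ⟨fun n => n + 1, fun n => univ_inter _, fun a b => Nat.succ_le_succ,
        fun n => n.succ_pos, fun n => Or.inr n.succ.lt_succ_self⟩
  obtain ⟨a, hlen, hstep⟩ := exists_coherent_cylinder_family_of_Iio hu hpos hgrow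
  refine ⟨a, fun n v _ i hi => hlen n v i (by rwa [hΛu] at hi), fun n v hv m => ?_⟩
  rw [hΛu n, hΛu (n + 1)]
  exact ⟨(hstep n v hv m).1, fun l l' h => (hstep n v hv m).2 h⟩
end

section
/- The Baire space N has a π-tree F such that cofin(ω) ≫ Rise_F(N). -/
open Set

universe u v

/-! The full tree of finite sequences, each node carrying the cylinder of its extensions, is a
π-tree on `ω^ω`. A neighbourhood `U` of `p` contains the cylinder of `p` of some length `n₀`;
the cylinder of `p` of every length `n ≥ n₀` is then a node at height `n` whose shoot π-refines
`{U}`, so every set `rise p U` contains the cofinite set `[n₀, ∞)`. -/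

open Topology FoliageTree

namespace List

variable {α : Type*} {a b c : List α}

def StrictPrefix (a b : List α) : Prop := a <+: b ∧ a ≠ b

theorem strictPrefix_iff : a.StrictPrefix b ↔ a <+: b ∧ a.length < b.length :=
  ⟨fun h => ⟨h.1, h.1.length_le.lt_of_ne fun hl => h.2 (h.1.eq_of_length hl)⟩,
    fun h => ⟨h.1, by rintro rfl; exact lt_irrefl _ h.2⟩⟩

theorem StrictPrefix.length_lt (h : a.StrictPrefix b) : a.length < b.length :=
  (strictPrefix_iff.1 h).2

theorem StrictPrefix.trans (hab : a.StrictPrefix b) (hbc : b.StrictPrefix c) :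
    a.StrictPrefix c :=
  strictPrefix_iff.2 ⟨hab.1.trans hbc.1, hab.length_lt.trans hbc.length_lt⟩

theorem strictPrefix_iff_length_lt_of_prefix (ha : a <+: c) (hb : b <+: c) :
    a.StrictPrefix b ↔ a.length < b.length :=
  strictPrefix_iff.trans ⟨And.right, fun h => ⟨prefix_of_prefix_length_le ha hb h.le, h⟩⟩

theorem strictPrefix_trichotomous_iff :
    a.StrictPrefix b ∨ a = b ∨ b.StrictPrefix a ↔ a <+: b ∨ b <+: a := by
  by_cases hab : a = b
  · subst hab; simp
  · simp [StrictPrefix, hab, Ne.symm hab]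

def strictPrefixesIso (c : List α) :
    (fun x y : {b : List α // b.StrictPrefix c} => x.1.StrictPrefix y.1) ≃r
      ((· < ·) : Fin c.length → Fin c.length → Prop) where
  toFun b := ⟨b.1.length, b.2.length_lt⟩
  invFun k := ⟨c.take k, strictPrefix_iff.2 ⟨take_prefix _ _, by simp⟩⟩
  left_inv b := Subtype.ext (prefix_iff_eq_take.1 b.2.1).symm
  right_inv k := Fin.ext (by simp)
  map_rel_iff' {x y} := (strictPrefix_iff_length_lt_of_prefix x.2.1 y.2.1).symm

end List

theorem PiNat.exists_cylinder_subset_of_mem_nhds {E : ℕ → Type*} [∀ n, TopologicalSpace (E n)]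
    [∀ n, DiscreteTopology (E n)] {p : ∀ n, E n} {U : Set (∀ n, E n)} (hU : U ∈ 𝓝 p) :
    ∃ n, PiNat.cylinder p n ⊆ U := by
  obtain ⟨_, ⟨x, n, rfl⟩, hp, hsub⟩ := (PiNat.isTopologicalBasis_cylinders E).mem_nhds_iff.1 hU
  exact ⟨n, PiNat.mem_cylinder_iff_eq.1 hp ▸ hsub⟩

theorem FoliageTree.piRefines_shoot_singleton {X : Type u} {F : FoliageTree X}
    (hF : F.LocallyStrict) {v : F.Node} (hv : ¬ F.IsMaxNode v) {U : Set X}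
    (hne : (F.leaf v).Nonempty) (hU : F.leaf v ⊆ U) : PiRefines (F.shoot v) {U} := by
  rintro _ rfl -
  exact ⟨F.leaf v, ⟨F.Sons v, subset_rfl, by simp, (hF v hv).1⟩, hne, hU⟩

theorem piRefines_cofin_univ {𝓡 : Set (Set ℕ)} (h : ∀ R ∈ 𝓡, ∃ n, Ici n ⊆ R) :
    PiRefines (cofin univ) 𝓡 := by
  intro R hR _
  obtain ⟨n, hn⟩ := h R hR
  exact ⟨univ \ Iio n, ⟨Iio n, finite_Iio n, subset_univ _, rfl⟩, ⟨n, by simp⟩,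
    by simpa [← compl_eq_univ_sdiff] using hn⟩

def prefixTree (α : Type) : FoliageTree (ℕ → α) where
  Node := List α
  lt := List.StrictPrefix
  lt_irrefl _ h := h.2 rfl
  lt_trans := List.StrictPrefix.trans
  wellOrdered c := (List.strictPrefixesIso c).toRelEmbedding.isWellOrder
  leaf s := {f | (List.range s.length).map f = s}

section PrefixTree

variable {α : Type}

theorem prefixTree_mem_leaf_iff {s : List α} {f : ℕ → α} :
    f ∈ (prefixTree α).leaf s ↔ (List.range s.length).map f = s :=
  Iff.rfl

theorem prefixTree_leaf_map_range (p : ℕ → α) (n : ℕ) :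
    (prefixTree α).leaf ((List.range n).map p) = PiNat.cylinder p n := by
  ext f
  simp [prefixTree_mem_leaf_iff, PiNat.mem_cylinder_iff]

theorem prefixTree_leaf_append_singleton (s : List α) (a : α) :
    (prefixTree α).leaf (s ++ [a]) = (prefixTree α).leaf s ∩ {f | f s.length = a} := by
  ext f
  simp [prefixTree_mem_leaf_iff, List.range_succ]

theorem prefixTree_leaf_nil : (prefixTree α).leaf [] = univ := by
  ext f
  simp [prefixTree_mem_leaf_iff]

theorem prefixTree_isRoot_nil : (prefixTree α).IsRoot [] := fun s => by
  rcases eq_or_ne [] s with h | h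
  exacts [Or.inl h, Or.inr ⟨List.nil_prefix, h⟩]

theorem prefixTree_not_isMaxNode [Nonempty α] (s : List α) : ¬ (prefixTree α).IsMaxNode s :=
  fun hmax => hmax
    ⟨s ++ [Classical.arbitrary α], List.strictPrefix_iff.2 ⟨s.prefix_append _, by simp⟩⟩

theorem prefixTree_height (s : List α) : (prefixTree α).height s = s.length :=
  (@RelIso.ordinalType_congr _ _ _ _ ((prefixTree α).wellOrdered s) _
    (List.strictPrefixesIso s)).trans (Ordinal.type_fin _)

theorem prefixTree_mem_sons_iff {s t : List α} :
    t ∈ (prefixTree α).Sons s ↔ ∃ a, t = s ++ [a] := by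
  constructor
  · rintro ⟨hst, hmin⟩
    obtain ⟨hpre, hlen⟩ := List.strictPrefix_iff.1 hst
    have hlen_succ : t.length = s.length + 1 := by
      by_contra hne
      refine hmin ⟨t.take (s.length + 1), List.strictPrefix_iff.2 ⟨?_, ?_⟩,
        List.strictPrefix_iff.2 ⟨List.take_prefix _ _, ?_⟩⟩
      · exact List.prefix_take_iff.2 ⟨hpre, s.length.le_succ⟩
      all_goals simp only [List.length_take]; omega
    obtain ⟨r, rfl⟩ := hpre
    obtain ⟨a, rfl⟩ := List.length_eq_one_iff.1 (by simpa using hlen_succ)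
    exact ⟨a, rfl⟩
  · rintro ⟨a, rfl⟩
    refine ⟨List.strictPrefix_iff.2 ⟨s.prefix_append _, by simp⟩, ?_⟩
    rintro ⟨u, hsu, hut⟩
    have := hsu.length_lt
    have := hut.length_lt
    simp only [List.length_append, List.length_singleton] at *
    omega

theorem prefixTree_locallyStrict : (prefixTree α).LocallyStrict := by
  rintro (s : List α) -
  constructor
  · refine Subset.antisymm (fun f hf => mem_biUnion (prefixTree_mem_sons_iff.2 ⟨f s.length, rfl⟩)
      (by rw [prefixTree_leaf_append_singleton]; exact ⟨hf, rfl⟩)) (iUnion₂_subset fun t ht => ?_)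
    obtain ⟨a, rfl⟩ := prefixTree_mem_sons_iff.1 ht
    rw [prefixTree_leaf_append_singleton]
    exact inter_subset_left
  · rintro _ ht _ hu hne
    obtain ⟨a, rfl⟩ := prefixTree_mem_sons_iff.1 ht
    obtain ⟨b, rfl⟩ := prefixTree_mem_sons_iff.1 hu
    rw [prefixTree_leaf_append_singleton, prefixTree_leaf_append_singleton]
    exact disjoint_left.2 fun f hfa hfb => hne (by rw [← hfa.2, ← hfb.2])

theorem prefixTree_openIn [TopologicalSpace α] [DiscreteTopology α] :
    (prefixTree α).OpenIn := by
  intro s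
  rcases ((prefixTree α).leaf s).eq_empty_or_nonempty with h | ⟨f, hf⟩
  · rw [h]
    exact isOpen_empty
  · rw [← prefixTree_mem_leaf_iff.1 hf, prefixTree_leaf_map_range]
    exact PiNat.isOpen_cylinder _ _ _

section Branch

variable {B : Set (List α)}

theorem prefixTree_isChainN_iff {C : Set (List α)} :
    (prefixTree α).IsChainN C ↔ ∀ x ∈ C, ∀ y ∈ C, x <+: y ∨ y <+: x :=
  ⟨fun h x hx y hy => List.strictPrefix_trichotomous_iff.1 (h x hx y hy),
    fun h x hx y hy => List.strictPrefix_trichotomous_iff.2 (h x hx y hy)⟩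

theorem prefixTree_mem_branch_of_comparable (hB : (prefixTree α).IsBranch B) {y : List α}
    (hy : ∀ x ∈ B, y <+: x ∨ x <+: y) : y ∈ B := by
  have hchain : (prefixTree α).IsChainN (insert y B : Set (List α)) := by
    rw [prefixTree_isChainN_iff]
    rintro a (rfl | ha) b (rfl | hb)
    · exact Or.inl List.prefix_rfl
    · exact hy b hb
    · exact (hy a ha).symm
    · exact prefixTree_isChainN_iff.1 hB.1 a ha b hb
  exact hB.2 _ hchain (subset_insert y B) ▸ mem_insert y B

theorem prefixTree_mem_branch_of_prefix (hB : (prefixTree α).IsBranch B) {x y : List α}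
    (hx : x ∈ B) (hyx : y <+: x) : y ∈ B :=
  prefixTree_mem_branch_of_comparable hB fun z hz =>
    (prefixTree_isChainN_iff.1 hB.1 x hx z hz).elim (fun h => Or.inl (hyx.trans h))
      (List.prefix_or_prefix_of_prefix hyx)

theorem prefixTree_branch_prefix_of_length_le (hB : (prefixTree α).IsBranch B) {x y : List α}
    (hx : x ∈ B) (hy : y ∈ B) (hxy : x.length ≤ y.length) : x <+: y := by
  rcases prefixTree_isChainN_iff.1 hB.1 x hx y hy with h | h
  · exact h
  · rw [h.eq_of_length (le_antisymm h.length_le hxy)]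

theorem prefixTree_branch_exists_length_eq [Nonempty α] (hB : (prefixTree α).IsBranch B)
    (n : ℕ) : ∃ x ∈ B, x.length = n := by
  have unbounded : ∀ x ∈ B, ∃ y ∈ B, x.length < y.length := by
    intro x hx
    by_contra! hmax
    have hext : x ++ [Classical.arbitrary α] ∈ B :=
      prefixTree_mem_branch_of_comparable hB fun z hz => Or.inr
        ((prefixTree_branch_prefix_of_length_le hB hz hx (hmax z hz)).trans (x.prefix_append _))
    simpa using hmax _ hext
  have long : ∀ m, ∃ y ∈ B, m ≤ y.length := by
    intro m
    induction m with
    | zero => exact ⟨[], prefixTree_mem_branch_of_comparable hB fun _ _ => Or.inl List.nil_prefix,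
        le_rfl⟩
    | succ m ih =>
      obtain ⟨y, hy, hmy⟩ := ih
      obtain ⟨z, hz, hyz⟩ := unbounded y hy
      exact ⟨z, hz, by omega⟩
  obtain ⟨y, hy, hny⟩ := long n
  exact ⟨y.take n, prefixTree_mem_branch_of_prefix hB hy (y.take_prefix n), by simp [hny]⟩

theorem prefixTree_strictBranches [Nonempty α] : (prefixTree α).StrictBranches := by
  refine ⟨⟨([] : List α)⟩, fun B hB => ?_⟩
  choose b hbB hb using prefixTree_branch_exists_length_eq hB
  let p : ℕ → α := fun i => (b (i + 1))[i]'(by rw [hb]; omega)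
  have hp : ∀ x ∈ B, p ∈ (prefixTree α).leaf x := by
    intro x hx
    refine List.ext_getElem (by simp) fun i hi _ => ?_
    have hbx : b (i + 1) <+: x :=
      prefixTree_branch_prefix_of_length_le hB (hbB _) hx (by rw [hb]; simpa using hi)
    simpa [p] using hbx.getElem _
  refine ⟨p, eq_singleton_iff_unique_mem.2 ⟨mem_iInter₂.2 hp, fun f hf => funext fun i => ?_⟩⟩
  have hfp := (prefixTree_mem_leaf_iff.1 (mem_iInter₂.1 hf _ (hbB (i + 1)))).trans
    (prefixTree_mem_leaf_iff.1 (hp _ (hbB (i + 1)))).symm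
  rw [hb, List.map_inj_left] at hfp
  exact hfp i (by simp)

end Branch

theorem Ici_subset_prefixTree_rise [Nonempty α] [TopologicalSpace α] [DiscreteTopology α]
    {p : ℕ → α} {U : Set (ℕ → α)} (hU : U ∈ 𝓝 p) :
    ∃ n₀, Ici n₀ ⊆ (prefixTree α).rise p U := by
  obtain ⟨n₀, hn₀⟩ := PiNat.exists_cylinder_subset_of_mem_nhds hU
  refine ⟨n₀, fun n hn => ⟨(List.range n).map p, ?_, ?_, ?_⟩⟩
  · show p ∈ (prefixTree α).leaf _
    rw [prefixTree_leaf_map_range]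
    exact PiNat.self_mem_cylinder p n
  · refine piRefines_shoot_singleton prefixTree_locallyStrict (prefixTree_not_isMaxNode _) ?_ ?_
      <;> rw [prefixTree_leaf_map_range]
    · exact ⟨p, PiNat.self_mem_cylinder p n⟩
    · exact (PiNat.cylinder_anti p hn).trans hn₀
  · simp [prefixTree_height]

theorem prefixTree_growsInto [Nonempty α] [TopologicalSpace α] [DiscreteTopology α] :
    (prefixTree α).GrowsInto := by
  intro p U hU
  obtain ⟨n₀, hn₀⟩ := Ici_subset_prefixTree_rise hU
  obtain ⟨v, hv, hshoot, -⟩ := hn₀ (mem_Ici.2 le_rfl)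
  exact ⟨v, hv, hshoot⟩

end PrefixTree

/-- The Baire space `ω^ω` has a π-tree whose Rise family is π-refined by the
cofinite subsets of `ω`. -/
theorem baireSpace_has_piTree_with_cofinite_rise :
    ∃ F : FoliageTree (ℕ → ℕ), F.IsPiTree ∧ PiRefines (cofin Set.univ) F.Rise := by
  refine ⟨prefixTree ℕ, ⟨⟨prefixTree_openIn, prefixTree_locallyStrict, ⟨RelIso.refl _⟩,
    prefixTree_strictBranches, [], prefixTree_isRoot_nil, prefixTree_leaf_nil⟩,
    prefixTree_growsInto⟩, piRefines_cofin_univ ?_⟩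
  rintro _ ⟨p, U, hU, rfl⟩
  exact Ici_subset_prefixTree_rise hU
end
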